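/- arXiv:2005.09318 — 9 statements merged into one kernel-verified Lean document; each statement's English description precedes it below -/
import Mathlib

section
/- Let $f : [0,T] \to \mathbb{R}$ be differentiable with absolutely continuous derivative. For every $x \in [0,T]$, we have $f'(x) = \frac{f(T)-f(0)}{T} + \int_0^T K(x,t)\, f''(t)\, dt$, where $K(x,t) = t/T$ for $0 \le t < x$ and $K(x,t) = (t-T)/T$ for $x < t \le T$. -/
open Set MeasureTheory intervalIntegral
open scoped Interval

/-! Since `peanoK T x t = 𝟙[t < x] - (T - t) / T`,
`∫₀ᵀ K(x,t) f''(t) dt = ∫₀ˣ f'' - (1/T) ∫₀ᵀ (T - t) f''(t) dt`. The first term is `f'(x) - f'(0)`;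
by the first-order Taylor formula with integral remainder,
`f T - f 0 = T f'(0) + ∫₀ᵀ (T - t) f''(t) dt`, the second is `f'(0) - (f T - f 0)/T`.
The Taylor formula comes from integrating `f' = f'(0) + ∫₀ᵗ f''` and integrating the primitive
of `f''` by parts against `t - T`, which is legitimate since that primitive is absolutely
continuous. -/

noncomputable def peanoK (T x t : ℝ) : ℝ := if t < x then t / T else (t - T) / T

theorem integral_primitive_eq_integral_sub_mul {g : ℝ → ℝ} {a b : ℝ}
    (hg : IntervalIntegrable g volume a b) :
    ∫ t in a..b, (∫ s in a..t, g s) = ∫ s in a..b, (b - s) * g s := by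
  have hP := hg.absolutelyContinuousOnInterval_intervalIntegral left_mem_uIcc
  have hQ : AbsolutelyContinuousOnInterval (fun t => t - b) a b :=
    (contDiff_id.sub contDiff_const).contDiffOn.absolutelyContinuousOnInterval
  have hderivP : ∀ᵐ t, t ∈ Ι a b →
      deriv (fun t => ∫ s in a..t, g s) t * (t - b) = g t * (t - b) := by
    filter_upwards [hg.ae_hasDerivAt_integral] with t ht htab
    rw [(ht (uIoc_subset_uIcc htab) a left_mem_uIcc).deriv]
  have hparts := hP.integral_mul_deriv_eq_deriv_mul hQ
  simp only [deriv_sub_const, deriv_id'', mul_one, sub_self, integral_same, mul_zero, zero_mul,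
    integral_congr_ae hderivP] at hparts
  rw [hparts, zero_sub, ← intervalIntegral.integral_neg]
  congr 1 with s
  ring

theorem sub_eq_mul_add_integral_sub_mul {f f' f'' : ℝ → ℝ} {a b : ℝ} (hab : a ≤ b)
    (hderiv : ∀ t ∈ Icc a b, HasDerivWithinAt f (f' t) (Icc a b) t)
    (hint : IntervalIntegrable f'' volume a b)
    (hAC : ∀ t ∈ Icc a b, f' t = f' a + ∫ s in a..t, f'' s) :
    f b - f a = (b - a) * f' a + ∫ s in a..b, (b - s) * f'' s := by
  have hP : ContinuousOn (fun t => ∫ s in a..t, f'' s) (Icc a b) := by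
    simpa only [uIcc_of_le hab] using
      (hint.absolutelyContinuousOnInterval_intervalIntegral left_mem_uIcc).continuousOn
  have hf'int : IntervalIntegrable f' volume a b :=
    ((continuousOn_const.add hP).congr hAC).intervalIntegrable_of_Icc hab
  rw [← integral_eq_sub_of_hasDerivAt_of_le hab (fun t ht => (hderiv t ht).continuousWithinAt)
      (fun t ht => (hderiv t (Ioo_subset_Icc_self ht)).hasDerivAt (Icc_mem_nhds ht.1 ht.2))
      hf'int,
    integral_congr (fun t ht => hAC t (uIcc_of_le hab ▸ ht)),
    integral_add intervalIntegrable_const (hP.intervalIntegrable_of_Icc hab),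
    intervalIntegral.integral_const,
    integral_primitive_eq_integral_sub_mul hint, smul_eq_mul]

theorem peanoK_mul_eq {T : ℝ} (hT : T ≠ 0) (x : ℝ) (g : ℝ → ℝ) (t : ℝ) :
    peanoK T x t * g t = (Iio x).indicator g t - T⁻¹ * ((T - t) * g t) := by
  unfold peanoK
  by_cases h : t < x
  · rw [if_pos h, indicator_of_mem (mem_Iio.2 h)]
    field_simp
    ring
  · rw [if_neg h, indicator_of_notMem (mt mem_Iio.1 h)]
    field_simp
    ring

theorem integral_peanoK_mul {T x : ℝ} {g : ℝ → ℝ} (hT : T ≠ 0) (hx : x ∈ Icc 0 T)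
    (hg : IntervalIntegrable g volume 0 T) :
    ∫ t in (0:ℝ)..T, peanoK T x t * g t
      = (∫ t in (0:ℝ)..x, g t) - (∫ t in (0:ℝ)..T, (T - t) * g t) / T := by
  have hind : ∫ t in (0:ℝ)..T, (Iio x).indicator g t = ∫ t in (0:ℝ)..x, g t := by
    rw [← intervalIntegral.integral_indicator hx]
    exact integral_congr_ae ((indicator_ae_eq_of_ae_eq_set Iio_ae_eq_Iic).mono fun _ h _ => h)
  have hind_int : IntervalIntegrable ((Iio x).indicator g) volume 0 T :=
    ⟨hg.1.indicator measurableSet_Iio, hg.2.indicator measurableSet_Iio⟩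
  simp only [peanoK_mul_eq hT]
  rw [intervalIntegral.integral_sub hind_int
    ((hg.continuousOn_mul (g := fun t => T - t) (by fun_prop)).const_mul _),
    intervalIntegral.integral_const_mul, hind, inv_mul_eq_div]

/-- **Peano kernel identity.** If `f : [0,T] → ℝ` is differentiable with
absolutely continuous derivative `f'` (expressed via the integral
representation `f' t = f' 0 + ∫₀ᵗ f''` with `f''` integrable), then for all
`x ∈ [0,T]`, `f'(x) = (f(T) - f(0))/T + ∫₀ᵀ K(x,t) f''(t) dt`. -/
theorem peano_kernel_identity
    (T : ℝ) (hT : 0 < T) (f f' f'' : ℝ → ℝ)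
    (hderiv : ∀ t ∈ Icc 0 T, HasDerivWithinAt f (f' t) (Icc 0 T) t)
    (hint : IntervalIntegrable f'' volume 0 T)
    (hAC : ∀ t ∈ Icc 0 T, f' t = f' 0 + ∫ s in (0:ℝ)..t, f'' s) :
    ∀ x ∈ Icc 0 T,
      f' x = (f T - f 0) / T + ∫ t in (0:ℝ)..T, peanoK T x t * f'' t := by
  intro x hx
  rw [hAC x hx, integral_peanoK_mul hT.ne' hx hint,
    sub_eq_mul_add_integral_sub_mul hT.le hderiv hint hAC]
  field_simp
  ring
end

section
/- Let $T > 0$ and let $f : [0,T] \to \mathbb{R}$ be differentiable with $f'$ Lipschitz of constant $1$, and suppose $|f(t)| \le 1$ for all $t \in [0,T]$. Then for all $x \in [0,T]$, $|f'(x)| \le 2/T + T/2 - x(T-x)/T$. In particular $\|f'\|_\infty \le T/2 + 2/T$. -/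
/-!
A function whose derivative is `K`-Lipschitz differs from its tangent line at `x` by at most
`K (y - x)² / 2`. Expanding `f` around `x ∈ [0, T]` at both endpoints and adding the two
estimates gives `f' x · T ≤ f T - f 0 + (x² + (T - x)²) / 2 ≤ 2 + T² / 2 - x (T - x)`,
and the same for `-f`.
-/

open Set

/-- Membership in Landau's class `𝓛₂(T)`: `f : [0,T] → ℝ` differentiable with
derivative `f'`, `|f| ≤ 1` on `[0,T]`, and `f'` Lipschitz of constant 1. -/
def InL2 (T : ℝ) (f f' : ℝ → ℝ) : Prop :=
  (∀ t ∈ Icc 0 T, HasDerivWithinAt f (f' t) (Icc 0 T) t) ∧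
  (∀ t ∈ Icc 0 T, |f t| ≤ 1) ∧
  LipschitzOnWith 1 f' (Icc 0 T)

section TaylorLipschitz

variable {f f' : ℝ → ℝ} {a b x y : ℝ} {K : NNReal}

theorem abs_sub_sub_mul_le_of_lipschitzOnWith_of_le
    (hf : ∀ t ∈ Icc a b, HasDerivWithinAt f (f' t) (Icc a b) t)
    (hK : LipschitzOnWith K f' (Icc a b)) (hx : x ∈ Icc a b) (hy : y ∈ Icc x b) :
    |f y - f x - f' x * (y - x)| ≤ K / 2 * (y - x) ^ 2 := by
  have hsub : Icc x b ⊆ Icc a b := Icc_subset_Icc_left hx.1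
  -- Fence the remainder, whose derivative `f' t - f' x` is bounded by `K (t - x)`.
  have hB (t : ℝ) : HasDerivAt (fun t => K / 2 * (t - x) ^ 2) (K * (t - x)) t := by
    refine (((hasDerivAt_id' t).sub_const x).fun_pow 2).const_mul (K / 2 : ℝ) |>.congr_deriv ?_
    norm_num
    ring
  refine image_norm_le_of_norm_deriv_right_le_deriv_boundary (f' := fun t => f' t - f' x)
    (f := fun t => f t - f x - f' x * (t - x)) ?_ (fun t ht => ?_) (by simp) hB
    (fun t ht => ?_) hy
  · have hfc : ContinuousOn f (Icc a b) := fun t ht => (hf t ht).continuousWithinAt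
    exact ((hfc.mono hsub).sub continuousOn_const).sub (by fun_prop)
  · have ht' : t ∈ Ico a b := ⟨hx.1.trans ht.1, ht.2⟩
    have := (hf t (Ico_subset_Icc_self ht')).mono_of_mem_nhdsWithin (Icc_mem_nhdsGE_of_mem ht')
    convert (this.sub_const (f x)).sub (((hasDerivWithinAt_id t _).sub_const x).const_mul (f' x))
      using 1
    · rfl
    · ring
  · have := hK.dist_le_mul t (hsub (Ico_subset_Icc_self ht)) x hx
    rw [Real.dist_eq, Real.dist_eq, abs_of_nonneg (sub_nonneg.2 ht.1)] at this
    simpa using this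

theorem abs_sub_sub_mul_le_of_lipschitzOnWith_of_ge
    (hf : ∀ t ∈ Icc a b, HasDerivWithinAt f (f' t) (Icc a b) t)
    (hK : LipschitzOnWith K f' (Icc a b)) (hx : x ∈ Icc a b) (hy : y ∈ Icc a x) :
    |f y - f x - f' x * (y - x)| ≤ K / 2 * (y - x) ^ 2 := by
  -- Reflect through `t ↦ -t` to reduce to the case `x ≤ y`.
  have hneg : MapsTo Neg.neg (Icc (-b) (-a)) (Icc a b) := fun t ht => by
    simp only [mem_Icc] at ht ⊢; constructor <;> linarith [ht.1, ht.2]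
  have hf_neg (t) (ht : t ∈ Icc (-b) (-a)) :
      HasDerivWithinAt (fun t => f (-t)) (-f' (-t)) (Icc (-b) (-a)) t := by
    have := (hf (-t) (hneg ht)).comp t (hasDerivWithinAt_neg t _) hneg
    simpa [Function.comp_def] using this
  have hK_neg : LipschitzOnWith K (fun t => -f' (-t)) (Icc (-b) (-a)) :=
    LipschitzOnWith.of_dist_le_mul fun s hs t ht => by
      simpa [Real.dist_eq, abs_sub_comm, ← neg_add', sub_eq_add_neg, add_comm]
        using hK.dist_le_mul _ (hneg hs) _ (hneg ht)
  have := abs_sub_sub_mul_le_of_lipschitzOnWith_of_le hf_neg hK_neg (x := -x) (y := -y)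
    ⟨by linarith [hx.2], by linarith [hx.1]⟩ ⟨by linarith [hy.2], by linarith [hy.1]⟩
  convert this using 2 <;> simp <;> ring

theorem abs_sub_sub_mul_le_of_lipschitzOnWith
    (hf : ∀ t ∈ Icc a b, HasDerivWithinAt f (f' t) (Icc a b) t)
    (hK : LipschitzOnWith K f' (Icc a b)) (hx : x ∈ Icc a b) (hy : y ∈ Icc a b) :
    |f y - f x - f' x * (y - x)| ≤ K / 2 * (y - x) ^ 2 := by
  rcases le_total x y with hxy | hyx
  · exact abs_sub_sub_mul_le_of_lipschitzOnWith_of_le hf hK hx ⟨hxy, hy.2⟩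
  · exact abs_sub_sub_mul_le_of_lipschitzOnWith_of_ge hf hK hx ⟨hy.1, hyx⟩

end TaylorLipschitz

theorem InL2.abs_deriv_le {T : ℝ} {f f' : ℝ → ℝ} (hT : 0 < T) (hf : InL2 T f f') {x : ℝ}
    (hx : x ∈ Icc 0 T) : |f' x| ≤ 2 / T + T / 2 - x * (T - x) / T := by
  obtain ⟨hderiv, hbdd, hlip⟩ := hf
  have h0 : (0 : ℝ) ∈ Icc 0 T := left_mem_Icc.2 hT.le
  have hT' : T ∈ Icc 0 T := right_mem_Icc.2 hT.le
  have htaylor_0 := abs_le.1 (abs_sub_sub_mul_le_of_lipschitzOnWith hderiv hlip hx h0)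
  have htaylor_T := abs_le.1 (abs_sub_sub_mul_le_of_lipschitzOnWith hderiv hlip hx hT')
  have hf0 := abs_le.1 (hbdd 0 h0)
  have hfT := abs_le.1 (hbdd T hT')
  rw [show 2 / T + T / 2 - x * (T - x) / T = (2 + (x ^ 2 + (T - x) ^ 2) / 2) / T by
    field_simp; ring, le_div_iff₀ hT]
  push_cast at htaylor_0 htaylor_T
  have : |f' x * T| ≤ 2 + (x ^ 2 + (T - x) ^ 2) / 2 := abs_le.2 ⟨by linarith, by linarith⟩
  rwa [abs_mul, abs_of_pos hT] at this

/-- For `f ∈ 𝓛₂(T)` and `x ∈ [0,T]`,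
`|f'(x)| ≤ 2/T + T/2 - x(T-x)/T`; in particular `‖f'‖_∞ ≤ T/2 + 2/T`. -/
theorem landau_pointwise_bound (T : ℝ) (hT : 0 < T) (f f' : ℝ → ℝ)
    (hf : InL2 T f f') :
    (∀ x ∈ Icc 0 T, |f' x| ≤ 2 / T + T / 2 - x * (T - x) / T) ∧
    (∀ x ∈ Icc 0 T, |f' x| ≤ T / 2 + 2 / T) := by
  refine ⟨fun x hx => hf.abs_deriv_le hT hx, fun x hx => (hf.abs_deriv_le hT hx).trans ?_⟩
  have : 0 ≤ x * (T - x) / T := div_nonneg (mul_nonneg hx.1 (sub_nonneg.2 hx.2)) hT.le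
  linarith
end

section
/- For $T \ge 2$, the supremum of $\|f'\|_\infty$ over all $f \in \mathcal{L}_2(T)$ equals $2$. -/
open Set

/-!
If `f'` is `1`-Lipschitz, Taylor's formula gives `|f v - f x - f' x * (v - x)| ≤ (v - x) ^ 2 / 2`.
For `x ∈ [0, T]` pick a window `[a, a + 2] ⊆ [0, T]` containing `x`; expanding around `x` towards
both ends and subtracting gives
`2 |f' x| ≤ |f (a + 2)| + |f a| + ((x - a) ^ 2 + (a + 2 - x) ^ 2) / 2 ≤ 2 + 2`.
Equality holds at `x = 0` for the paper's extremal function.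
-/

open scoped Topology NNReal

section TaylorLipschitz

variable {s : Set ℝ} {f f' : ℝ → ℝ} {K : ℝ≥0}

/-- The derivative `f' t - f' u - K * (t - u)` of `t ↦ f t - f' u * t - K / 2 * (t - u) ^ 2` is
nonnegative left of `u` and nonpositive right of `u` by the Lipschitz bound, so this function
peaks at `u`. -/
theorem sub_sub_mul_le_of_lipschitzOnWith_deriv (hs : Convex ℝ s)
    (hf : ∀ t ∈ s, HasDerivWithinAt f (f' t) s t) (hf' : LipschitzOnWith K f' s)
    {u v : ℝ} (hu : u ∈ s) (hv : v ∈ s) :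
    f v - f u - f' u * (v - u) ≤ K / 2 * (v - u) ^ 2 := by
  set φ : ℝ → ℝ := fun t ↦ f t - (f' u * t + K / 2 * (t - u) ^ 2)
  have hφ : ∀ t ∈ s, HasDerivWithinAt φ (f' t - (f' u + K * (t - u))) s t := fun t ht ↦ by
    have hq := ((hasDerivAt_id' t).const_mul (f' u)).add
      ((((hasDerivAt_id' t).sub_const u).pow 2).const_mul ((K : ℝ) / 2))
    exact (hf t ht).sub (hq.congr_deriv (by ring)).hasDerivWithinAt
  have hφ_on : ∀ D ⊆ s, ∀ t ∈ interior D,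
      HasDerivWithinAt φ (f' t - (f' u + K * (t - u))) (interior D) t := fun D hD t ht ↦
    (hφ t (hD (interior_subset ht))).mono (interior_subset.trans hD)
  have hcont : ContinuousOn φ s := fun t ht ↦ (hφ t ht).continuousWithinAt
  have hlip : ∀ t ∈ s, |f' t - f' u| ≤ K * |t - u| := fun t ht ↦ by
    simpa only [Real.dist_eq] using hf'.dist_le_mul t ht u hu
  suffices φ v ≤ φ u by simp only [φ] at this; linarith
  rcases le_total u v with huv | hvu
  · refine antitoneOn_of_hasDerivWithinAt_nonpos (hs.inter (convex_Ici u))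
      (hcont.mono inter_subset_left) (hφ_on _ inter_subset_left) (fun t ht ↦ ?_)
      ⟨hu, self_mem_Ici⟩ ⟨hv, huv⟩ huv
    obtain ⟨hts, hut⟩ := interior_subset ht
    have h := (le_abs_self _).trans (hlip t hts)
    rw [abs_of_nonneg (sub_nonneg.2 hut)] at h
    linarith
  · refine monotoneOn_of_hasDerivWithinAt_nonneg (hs.inter (convex_Iic u))
      (hcont.mono inter_subset_left) (hφ_on _ inter_subset_left) (fun t ht ↦ ?_)
      ⟨hv, hvu⟩ ⟨hu, self_mem_Iic⟩ hvu
    obtain ⟨hts, htu⟩ := interior_subset ht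
    have h := (neg_abs_le _).trans' (neg_le_neg (hlip t hts))
    rw [abs_of_nonpos (sub_nonpos.2 htu)] at h
    linarith

theorem abs_sub_sub_mul_le_of_lipschitzOnWith_deriv (hs : Convex ℝ s)
    (hf : ∀ t ∈ s, HasDerivWithinAt f (f' t) s t) (hf' : LipschitzOnWith K f' s)
    {u v : ℝ} (hu : u ∈ s) (hv : v ∈ s) :
    |f v - f u - f' u * (v - u)| ≤ K / 2 * (v - u) ^ 2 := by
  have hneg := sub_sub_mul_le_of_lipschitzOnWith_deriv (f := -f) (f' := -f') hs
    (fun t ht ↦ (hf t ht).neg) hf'.neg hu hv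
  simp only [Pi.neg_apply] at hneg
  exact abs_le.2 ⟨by linarith, sub_sub_mul_le_of_lipschitzOnWith_deriv hs hf hf' hu hv⟩

theorem mul_abs_le_of_lipschitzOnWith_deriv (hs : Convex ℝ s)
    (hf : ∀ t ∈ s, HasDerivWithinAt f (f' t) s t) (hf' : LipschitzOnWith K f' s)
    {M a b x : ℝ} (hM : ∀ t ∈ s, |f t| ≤ M) (ha : a ∈ s) (hb : b ∈ s) (hx : x ∈ Icc a b) :
    (b - a) * |f' x| ≤ 2 * M + K / 2 * (b - a) ^ 2 := by
  have hxs : x ∈ s := hs.ordConnected.out ha hb hx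
  have hRa := abs_le.1 (abs_sub_sub_mul_le_of_lipschitzOnWith_deriv hs hf hf' hxs ha)
  have hRb := abs_le.1 (abs_sub_sub_mul_le_of_lipschitzOnWith_deriv hs hf hf' hxs hb)
  have hfa := abs_le.1 (hM a ha)
  have hfb := abs_le.1 (hM b hb)
  have hsq : K / 2 * ((a - x) ^ 2 + (b - x) ^ 2) ≤ K / 2 * (b - a) ^ 2 := by
    gcongr
    nlinarith [mul_nonneg (sub_nonneg.2 hx.1) (sub_nonneg.2 hx.2)]
  have h : |(b - a) * f' x| ≤ 2 * M + K / 2 * (b - a) ^ 2 :=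
    abs_le.2 ⟨by linarith, by linarith⟩
  rwa [abs_mul, abs_of_nonneg (sub_nonneg.2 (hx.1.trans hx.2))] at h

end TaylorLipschitz

theorem exists_mem_Icc_add_subset_Icc {p q x L : ℝ} (hx : x ∈ Icc p q) (hL : 0 ≤ L)
    (hLq : L ≤ q - p) : ∃ a, Icc a (a + L) ⊆ Icc p q ∧ x ∈ Icc a (a + L) := by
  refine ⟨min x (q - L), Icc_subset_Icc (le_min hx.1 (by linarith)) ?_, min_le_left _ _, ?_⟩
  · linarith [min_le_right x (q - L)]
  · rcases le_total x (q - L) with h | h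
    · rw [min_eq_left h]; linarith
    · rw [min_eq_right h]; linarith [hx.2]

noncomputable def landauExtremalDeriv (t : ℝ) : ℝ := max (2 - t) 0

/-- This is `-t ^ 2 / 2 + 2 * t - 1` for `t ≤ 2` and `1` for `t ≥ 2`. -/
noncomputable def landauExtremal (t : ℝ) : ℝ := 1 - landauExtremalDeriv t ^ 2 / 2

theorem hasDerivAt_landauExtremal (t : ℝ) :
    HasDerivAt landauExtremal (landauExtremalDeriv t) t := by
  refine hasDerivAt_of_hasDerivAt_of_ne' (x := 2) (fun y hy ↦ ?_)
    (by unfold landauExtremal landauExtremalDeriv; fun_prop)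
    (by unfold landauExtremalDeriv; fun_prop) t
  rcases hy.lt_or_gt with hy | hy
  · have hpoly : HasDerivAt (fun t : ℝ ↦ 1 - (2 - t) ^ 2 / 2) (2 - y) y :=
      ((((hasDerivAt_id' y).const_sub 2).pow 2).div_const 2).const_sub 1 |>.congr_deriv (by ring)
    have heq : landauExtremal =ᶠ[𝓝 y] fun t ↦ 1 - (2 - t) ^ 2 / 2 := by
      filter_upwards [Iio_mem_nhds hy] with t ht
      rw [landauExtremal, landauExtremalDeriv, max_eq_left (by linarith [mem_Iio.1 ht])]
    rw [landauExtremalDeriv, max_eq_left (by linarith)]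
    exact hpoly.congr_of_eventuallyEq heq
  · have heq : landauExtremal =ᶠ[𝓝 y] fun _ ↦ 1 := by
      filter_upwards [Ioi_mem_nhds hy] with t ht
      rw [landauExtremal, landauExtremalDeriv, max_eq_right (by linarith [mem_Ioi.1 ht])]
      norm_num
    rw [landauExtremalDeriv, max_eq_right (by linarith)]
    exact (hasDerivAt_const y 1).congr_of_eventuallyEq heq

theorem lipschitzWith_landauExtremalDeriv : LipschitzWith 1 landauExtremalDeriv :=
  (LipschitzWith.of_dist_le_mul fun s t ↦ by
    rw [Real.dist_eq, Real.dist_eq, NNReal.coe_one, one_mul, sub_sub_sub_cancel_left,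
      abs_sub_comm]).max_const 0

theorem inL2_landauExtremal (T : ℝ) : InL2 T landauExtremal landauExtremalDeriv := by
  refine ⟨fun t _ ↦ (hasDerivAt_landauExtremal t).hasDerivWithinAt, fun t ht ↦ ?_,
    lipschitzWith_landauExtremalDeriv.lipschitzOnWith⟩
  have h0 : 0 ≤ landauExtremalDeriv t := le_max_right _ _
  have h2 : landauExtremalDeriv t ≤ 2 := max_le (by linarith [ht.1]) zero_le_two
  rw [landauExtremal, abs_le]
  constructor <;> nlinarith

/-- For `T ≥ 2`, `sup_{f ∈ 𝓛₂(T)} ‖f'‖_∞ = 2` (and the supremum is attained). -/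
theorem landau_sup_large_T (T : ℝ) (hT : 2 ≤ T) :
    IsGreatest {y : ℝ | ∃ f f' : ℝ → ℝ, InL2 T f f' ∧
        ∃ x ∈ Icc 0 T, y = |f' x|} 2 := by
  refine ⟨⟨landauExtremal, landauExtremalDeriv, inL2_landauExtremal T, 0,
    ⟨le_rfl, by linarith⟩, by norm_num [landauExtremalDeriv]⟩, ?_⟩
  rintro _ ⟨f, f', ⟨hf, hf_le, hf'⟩, x, hx, rfl⟩
  obtain ⟨a, haT, hxa⟩ := exists_mem_Icc_add_subset_Icc hx zero_le_two (by linarith)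
  have h := mul_abs_le_of_lipschitzOnWith_deriv (convex_Icc 0 T) hf hf' hf_le
    (haT (left_mem_Icc.2 (by linarith))) (haT (right_mem_Icc.2 (by linarith))) hxa
  norm_num at h
  linarith
end

section
/- Let $f \in \mathcal{L}_2(T)$, $t_0 \in [0,T]$, and let $h, h' \ge 0$ with $h + h' > 0$, $t_0 - h \ge 0$ and $t_0 + h' \le T$. Then $f'(t_0) \le \frac{2}{h+h'} + \frac{h^2 + h'^2}{2(h+h')}$. -/
open Set

/-- If `f ∈ 𝓛₂(T)`, `t₀ ∈ [0,T]`, `h, h' ≥ 0` with `h + h' > 0`,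
`t₀ - h ≥ 0` and `t₀ + h' ≤ T`, then
`f'(t₀) ≤ 2/(h+h') + (h² + h'²)/(2(h+h'))`. -/
theorem landau_local_bound (T : ℝ) (f f' : ℝ → ℝ) (hf : InL2 T f f')
    (t₀ h h' : ℝ) (ht₀ : t₀ ∈ Icc 0 T) (hh : 0 ≤ h) (hh' : 0 ≤ h')
    (hpos : 0 < h + h') (h1 : 0 ≤ t₀ - h) (h2 : t₀ + h' ≤ T) :
    f' t₀ ≤ 2 / (h + h') + (h ^ 2 + h' ^ 2) / (2 * (h + h')) := by
  obtain ⟨hder, hbd, hlip⟩ := hf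
  have hcont : ContinuousOn f (Icc 0 T) := fun t ht => (hder t ht).continuousWithinAt
  have hlip' : ∀ t ∈ Icc 0 T, |f' t - f' t₀| ≤ |t - t₀| := by
    intro t ht
    have := hlip.dist_le_mul t ht t₀ ht₀
    simpa [Real.dist_eq] using this
  -- derivative as a HasDerivAt at interior points
  have hderAt : ∀ x ∈ Ioo (0:ℝ) T, HasDerivAt f (f' x) x := by
    intro x hx
    exact (hder x (Ioo_subset_Icc_self hx)).hasDerivAt
      (Icc_mem_nhds hx.1 hx.2)
  -- right-hand Taylor estimate: f' t₀ * h' ≤ f (t₀+h') - f t₀ + h'^2/2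
  have keyR : f' t₀ * h' ≤ f (t₀ + h') - f t₀ + h' ^ 2 / 2 := by
    set g : ℝ → ℝ := fun t => f t - f' t₀ * t + (t - t₀) ^ 2 / 2 with hg
    have hsub : Icc t₀ (t₀ + h') ⊆ Icc 0 T := Icc_subset_Icc ht₀.1 h2
    have hmono : MonotoneOn g (Icc t₀ (t₀ + h')) := by
      apply monotoneOn_of_deriv_nonneg (convex_Icc _ _)
      · exact ((hcont.mono hsub).sub (continuousOn_const.mul continuousOn_id)).add
          (Continuous.continuousOn (by continuity))
      · rw [interior_Icc]
        intro x hx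
        have hx' : x ∈ Ioo (0:ℝ) T := ⟨lt_of_le_of_lt ht₀.1 hx.1, lt_of_lt_of_le hx.2 h2⟩
        exact (((hderAt x hx').sub ((hasDerivAt_id x).const_mul (f' t₀))).add
          ((((hasDerivAt_id x).sub_const t₀).pow 2).div_const 2)).differentiableAt.differentiableWithinAt
      · rw [interior_Icc]
        intro x hx
        have hx' : x ∈ Ioo (0:ℝ) T := ⟨lt_of_le_of_lt ht₀.1 hx.1, lt_of_lt_of_le hx.2 h2⟩
        have hd : HasDerivAt g (f' x - f' t₀ * 1 + 2 * (x - t₀) ^ 1 * 1 / 2) x :=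
          ((hderAt x hx').sub ((hasDerivAt_id x).const_mul (f' t₀))).add
            ((((hasDerivAt_id x).sub_const t₀).pow 2).div_const 2)
        rw [hd.deriv]
        have := hlip' x (Ioo_subset_Icc_self hx')
        have habs : |x - t₀| = x - t₀ := abs_of_nonneg (by linarith [hx.1])
        rw [habs] at this
        have := abs_le.1 this
        ring_nf
        nlinarith [this.1]
    have := hmono (left_mem_Icc.2 (by linarith)) (right_mem_Icc.2 (by linarith)) (by linarith)
    simp only [hg] at this
    nlinarith [this]
  -- left-hand Taylor estimate: f' t₀ * h ≤ f t₀ - f (t₀ - h) + h^2/2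
  have keyL : f' t₀ * h ≤ f t₀ - f (t₀ - h) + h ^ 2 / 2 := by
    set g : ℝ → ℝ := fun t => f t - f' t₀ * t - (t - t₀) ^ 2 / 2 with hg
    have hsub : Icc (t₀ - h) t₀ ⊆ Icc 0 T := Icc_subset_Icc h1 ht₀.2
    have hmono : MonotoneOn g (Icc (t₀ - h) t₀) := by
      apply monotoneOn_of_deriv_nonneg (convex_Icc _ _)
      · exact ((hcont.mono hsub).sub (continuousOn_const.mul continuousOn_id)).sub
          (Continuous.continuousOn (by continuity))
      · rw [interior_Icc]
        intro x hx
        have hx' : x ∈ Ioo (0:ℝ) T := ⟨lt_of_le_of_lt h1 hx.1, lt_of_lt_of_le hx.2 ht₀.2⟩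
        exact (((hderAt x hx').sub ((hasDerivAt_id x).const_mul (f' t₀))).sub
          ((((hasDerivAt_id x).sub_const t₀).pow 2).div_const 2)).differentiableAt.differentiableWithinAt
      · rw [interior_Icc]
        intro x hx
        have hx' : x ∈ Ioo (0:ℝ) T := ⟨lt_of_le_of_lt h1 hx.1, lt_of_lt_of_le hx.2 ht₀.2⟩
        have hd : HasDerivAt g (f' x - f' t₀ * 1 - 2 * (x - t₀) ^ 1 * 1 / 2) x :=
          ((hderAt x hx').sub ((hasDerivAt_id x).const_mul (f' t₀))).sub
            ((((hasDerivAt_id x).sub_const t₀).pow 2).div_const 2)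
        rw [hd.deriv]
        have := hlip' x (Ioo_subset_Icc_self hx')
        have habs : |x - t₀| = -(x - t₀) := abs_of_nonpos (by linarith [hx.2])
        rw [habs] at this
        have := abs_le.1 this
        ring_nf
        nlinarith [this.1]
    have := hmono (left_mem_Icc.2 (by linarith)) (right_mem_Icc.2 (by linarith)) (by linarith)
    simp only [hg] at this
    nlinarith [this]
  -- combine with |f| ≤ 1
  have hb1 := abs_le.1 (hbd (t₀ + h') ⟨by linarith [ht₀.1], h2⟩)
  have hb2 := abs_le.1 (hbd (t₀ - h) ⟨h1, by linarith [ht₀.2]⟩)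
  rw [div_add_div _ _ (by positivity) (by positivity : (2:ℝ) * (h + h') ≠ 0)]
  rw [le_div_iff₀ (by positivity)]
  nlinarith [keyR, keyL, hb1.1, hb1.2, hb2.1, hb2.2]
end

section
/- Let $0 \le t_0 \le T/2$ with $t_0 \le \sqrt 2$ and $T > \sqrt{2t_0^2 + 4}$. Then $\sup_{f \in \mathcal{L}_2(T)} f'(t_0) = \sqrt{2t_0^2 + 4} - t_0$. -/
open Set Real

open intervalIntegral

/-!
Since `f'` is `1`-Lipschitz, `f' x ≥ f' t₀ - |x - t₀|`; integrating over `[0, b]` and using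
`f b - f 0 ≤ 2` gives `f' t₀ * b ≤ 2 + (t₀² + (b - t₀)²) / 2` for every `b ∈ [t₀, T]`, and the
choice `b = √(2t₀² + 4)` turns this into `f' t₀ ≤ √(2t₀² + 4) - t₀`. Equality holds for the
primitive, normalised by `f 0 = -1`, of the tent `max (σ - |u - t₀|) 0` of height
`σ = √(2t₀² + 4) - t₀`: the condition `t₀ ≤ √2` makes `σ ≥ t₀`, so the tent is only cut off on
the left by `0`, and its remaining area over `[0, T]` is exactly `2`.
-/

lemma integral_abs_sub {a b c : ℝ} (hac : a ≤ c) (hcb : c ≤ b) :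
    ∫ x in a..b, |x - c| = ((c - a) ^ 2 + (b - c) ^ 2) / 2 := by
  have hint : ∀ p q : ℝ, IntervalIntegrable (fun x => |x - c|) MeasureTheory.volume p q :=
    fun p q => Continuous.intervalIntegrable (by fun_prop) p q
  have hleft : ∫ x in a..c, |x - c| = ∫ x in a..c, (c - x) :=
    integral_congr fun x hx => by
      rw [uIcc_of_le hac] at hx
      simp only [abs_of_nonpos (sub_nonpos.2 hx.2), neg_sub]
  have hright : ∫ x in c..b, |x - c| = ∫ x in c..b, (x - c) :=
    integral_congr fun x hx => by
      rw [uIcc_of_le hcb] at hx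
      simp only [abs_of_nonneg (sub_nonneg.2 hx.1)]
  rw [← integral_add_adjacent_intervals (hint a c) (hint c b), hleft, hright,
    integral_sub intervalIntegrable_const intervalIntegrable_id,
    integral_sub intervalIntegrable_id intervalIntegrable_const]
  simp only [integral_const, integral_id, smul_eq_mul]
  ring

lemma integral_const_sub_abs_sub (k : ℝ) {a b c : ℝ} (hac : a ≤ c) (hcb : c ≤ b) :
    ∫ x in a..b, (k - |x - c|) = k * (b - a) - ((c - a) ^ 2 + (b - c) ^ 2) / 2 := by
  rw [integral_sub intervalIntegrable_const
    (Continuous.intervalIntegrable (by fun_prop) a b), integral_abs_sub hac hcb,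
    integral_const, smul_eq_mul, mul_comm]

namespace InL2

variable {T : ℝ} {f f' : ℝ → ℝ}

lemma integral_deriv_eq_sub (hf : InL2 T f f') {a b : ℝ} (ha : 0 ≤ a) (hab : a ≤ b) (hb : b ≤ T) :
    ∫ x in a..b, f' x = f b - f a := by
  have hsub : Icc a b ⊆ Icc 0 T := Icc_subset_Icc ha hb
  refine integral_eq_sub_of_hasDerivAt_of_le hab
    (fun t ht => (hf.1 t (hsub ht)).continuousWithinAt.mono hsub) (fun t ht => ?_)
    ((hf.2.2.continuousOn.mono hsub).intervalIntegrable_of_Icc hab)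
  have hnhds : Icc 0 T ∈ nhds t := Icc_mem_nhds (ha.trans_lt ht.1) (ht.2.trans_le hb)
  exact (hf.1 t (mem_of_mem_nhds hnhds)).hasDerivAt hnhds

lemma sub_abs_sub_le (hf : InL2 T f f') {t₀ x : ℝ} (ht₀ : t₀ ∈ Icc 0 T) (hx : x ∈ Icc 0 T) :
    f' t₀ - |x - t₀| ≤ f' x := by
  have hdist := hf.2.2.dist_le_mul x hx t₀ ht₀
  rw [NNReal.coe_one, one_mul, dist_eq, dist_eq] at hdist
  linarith [neg_abs_le (f' x - f' t₀)]

lemma deriv_mul_le (hf : InL2 T f f') {t₀ b : ℝ} (ht₀ : 0 ≤ t₀) (ht₀b : t₀ ≤ b) (hbT : b ≤ T) :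
    f' t₀ * b ≤ 2 + (t₀ ^ 2 + (b - t₀) ^ 2) / 2 := by
  have hb0 : 0 ≤ b := ht₀.trans ht₀b
  have hbounds := fun t (ht : t ∈ Icc 0 T) => abs_le.1 (hf.2.1 t ht)
  calc f' t₀ * b = (∫ x in (0 : ℝ)..b, (f' t₀ - |x - t₀|)) + (t₀ ^ 2 + (b - t₀) ^ 2) / 2 := by
        rw [integral_const_sub_abs_sub _ ht₀ ht₀b]
        ring
    _ ≤ (∫ x in (0 : ℝ)..b, f' x) + (t₀ ^ 2 + (b - t₀) ^ 2) / 2 := by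
        gcongr
        exact integral_mono_on hb0
          (Continuous.intervalIntegrable (by fun_prop) 0 b)
          ((hf.2.2.continuousOn.mono (Icc_subset_Icc_right hbT)).intervalIntegrable_of_Icc hb0)
          fun x hx => hf.sub_abs_sub_le ⟨ht₀, ht₀b.trans hbT⟩ ⟨hx.1, hx.2.trans hbT⟩
    _ ≤ 2 + (t₀ ^ 2 + (b - t₀) ^ 2) / 2 := by
        rw [hf.integral_deriv_eq_sub le_rfl hb0 hbT]
        linarith [(hbounds b ⟨hb0, hbT⟩).2, (hbounds 0 ⟨le_rfl, hb0.trans hbT⟩).1]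

end InL2

lemma inL2_neg_one_add_integral {T : ℝ} {g : ℝ → ℝ} (hg : LipschitzWith 1 g)
    (hg0 : ∀ x, 0 ≤ g x) (hgT : ∫ x in (0 : ℝ)..T, g x ≤ 2) :
    InL2 T (fun t => -1 + ∫ x in (0 : ℝ)..t, g x) g := by
  refine ⟨fun t _ => ?_, fun t ht => abs_le.2 ⟨?_, ?_⟩, hg.lipschitzOnWith⟩
  · exact ((hg.continuous.integral_hasStrictDerivAt 0 t).hasDerivAt.const_add (-1)).hasDerivWithinAt
  · have : 0 ≤ ∫ x in (0 : ℝ)..t, g x := integral_nonneg ht.1 fun x _ => hg0 x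
    linarith
  · have : ∫ x in (0 : ℝ)..t, g x ≤ ∫ x in (0 : ℝ)..T, g x :=
      integral_mono_interval le_rfl ht.1 ht.2
        (Filter.Eventually.of_forall hg0) (hg.continuous.intervalIntegrable 0 T)
    linarith

def tent (σ c u : ℝ) : ℝ := max (σ - |u - c|) 0

lemma tent_nonneg (σ c u : ℝ) : 0 ≤ tent σ c u := le_max_right _ _

lemma tent_self {σ : ℝ} (hσ : 0 ≤ σ) (c : ℝ) : tent σ c c = σ := by
  simp [tent, hσ]

lemma lipschitzWith_tent (σ c : ℝ) : LipschitzWith 1 (tent σ c) := by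
  refine LipschitzWith.of_dist_le_mul fun x y => ?_
  rw [NNReal.coe_one, one_mul, dist_eq, dist_eq]
  calc |tent σ c x - tent σ c y| ≤ |(σ - |x - c|) - (σ - |y - c|)| := abs_max_sub_max_le_abs _ _ _
    _ = |(|y - c| - |x - c|)| := by ring_nf
    _ ≤ |(y - c) - (x - c)| := abs_abs_sub_abs_le_abs_sub _ _
    _ = |x - y| := by rw [abs_sub_comm]; ring_nf

lemma integral_tent {T σ c : ℝ} (hc : 0 ≤ c) (hcσ : c ≤ σ) (hT : c + σ ≤ T) :
    ∫ u in (0 : ℝ)..T, tent σ c u = σ * (c + σ) - (c ^ 2 + σ ^ 2) / 2 := by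
  have hint : ∀ p q : ℝ, IntervalIntegrable (tent σ c) MeasureTheory.volume p q :=
    (lipschitzWith_tent σ c).continuous.intervalIntegrable
  have hinside : ∫ u in (0 : ℝ)..c + σ, tent σ c u = ∫ u in (0 : ℝ)..c + σ, (σ - |u - c|) :=
    integral_congr fun u hu => by
      rw [uIcc_of_le (by linarith)] at hu
      refine max_eq_left (sub_nonneg.2 (abs_sub_le_iff.2 ⟨?_, ?_⟩)) <;> linarith [hu.1, hu.2]
  have houtside : ∫ u in c + σ..T, tent σ c u = 0 := by
    refine (integral_congr fun u hu => ?_).trans integral_zero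
    rw [uIcc_of_le hT] at hu
    refine max_eq_right (sub_nonpos.2 ?_)
    rw [abs_of_nonneg (by linarith [hu.1])]
    linarith [hu.1]
  rw [← integral_add_adjacent_intervals (hint 0 (c + σ)) (hint (c + σ) T),
    houtside, hinside, integral_const_sub_abs_sub _ hc (by linarith)]
  ring

theorem landau_pointwise_sup_middle_general (T t₀ : ℝ) (ht₀0 : 0 ≤ t₀)
    (ht₀2 : t₀ ≤ Real.sqrt 2)
    (hT : Real.sqrt (2 * t₀ ^ 2 + 4) < T) :
    IsGreatest {y : ℝ | ∃ f f' : ℝ → ℝ, InL2 T f f' ∧ y = f' t₀}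
      (Real.sqrt (2 * t₀ ^ 2 + 4) - t₀) := by
  set S := Real.sqrt (2 * t₀ ^ 2 + 4)
  have hS2 : S ^ 2 = 2 * t₀ ^ 2 + 4 := Real.sq_sqrt (by positivity)
  have hS0 : 0 < S := Real.sqrt_pos.2 (by positivity)
  have ht₀sq : t₀ ^ 2 ≤ 2 := (Real.le_sqrt ht₀0 zero_le_two).1 ht₀2
  have h2t₀S : 2 * t₀ ≤ S := (Real.le_sqrt (by positivity) (by positivity)).2 (by linarith)
  have harea : (S - t₀) * S - (t₀ ^ 2 + (S - t₀) ^ 2) / 2 = 2 := by linear_combination hS2 / 2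
  refine ⟨⟨_, _, inL2_neg_one_add_integral (lipschitzWith_tent (S - t₀) t₀) (tent_nonneg _ _)
    ?_, (tent_self (by linarith) t₀).symm⟩, ?_⟩
  · rw [integral_tent ht₀0 (by linarith) (by linarith)]
    linarith
  · rintro _ ⟨f, f', hf, rfl⟩
    have hbound := hf.deriv_mul_le ht₀0 (by linarith) hT.le
    exact le_of_mul_le_mul_right (by linarith) hS0

/-- Pointwise Landau problem, middle case: if `0 ≤ t₀ ≤ T/2`, `t₀ ≤ √2` and
`T > √(2t₀² + 4)`, then `sup_{f ∈ 𝓛₂(T)} f'(t₀) = √(2t₀² + 4) - t₀`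
(and it is attained). -/
theorem landau_pointwise_sup_middle (T t₀ : ℝ) (ht₀0 : 0 ≤ t₀)
    (ht₀T : t₀ ≤ T / 2) (ht₀2 : t₀ ≤ Real.sqrt 2)
    (hT : Real.sqrt (2 * t₀ ^ 2 + 4) < T) :
    IsGreatest {y : ℝ | ∃ f f' : ℝ → ℝ, InL2 T f f' ∧ y = f' t₀}
      (Real.sqrt (2 * t₀ ^ 2 + 4) - t₀) :=
  landau_pointwise_sup_middle_general T t₀ ht₀0 ht₀2 hT
end

section
/- Let $q : \mathbb{R} \to \mathbb{R}$ be the $4\sqrt 2$-periodic function with $q(t) = 1 - t^2/2$ for $|t| \le \sqrt 2$ and $q(t + 2\sqrt 2) = -q(t)$ for all $t$. Then $q$ is differentiable on $\mathbb{R}$, $q'$ is Lipschitz of constant $1$, $\|q\|_\infty = 1$, $\|q'\|_\infty = \sqrt 2$, and $q$ satisfies the differential equation $|q(t)| = 1 - q'(t)^2/2$ for all $t$. -/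
/-!
The derivative of `q` is the triangle wave `w` of amplitude `√2` and period `4√2`, written as
`w t = ‖t - √2‖ - √2` with the norm of `ℝ ⧸ 4√2 ℤ`; being a distance function, `w` is
`1`-Lipschitz. Both `q` and `w` are `2√2`-antiperiodic, so `q' = w` and `|q| = 1 - w² / 2`
only need checking on the half-period `(-√2, √2]`, where `q t = 1 - t² / 2` and `w t = -t`.
At the junction `√2` the parabola and its reflection `u ↦ -q (u - 2√2)` both have slope `-√2`.
-/

open Set Real Function

theorem Function.Antiperiodic.hasDerivAt_add_zsmul {𝕜 F : Type*} [NontriviallyNormedField 𝕜]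
    [NormedAddCommGroup F] [NormedSpace 𝕜 F] {f : 𝕜 → F} {f' : F} {c x : 𝕜}
    (hf : Antiperiodic f c) (hx : HasDerivAt f f' x) (n : ℤ) :
    HasDerivAt f ((n.negOnePow : ℤ) • f') (x + n • c) := by
  have hshift : f = fun u => (n.negOnePow : ℤ) • f (u - n • c) := by
    funext u
    rw [hf.sub_zsmul_eq, smul_smul, ← Units.val_mul, ← Int.negOnePow_add, ← two_mul,
      Int.negOnePow_two_mul, Units.val_one, one_smul]
  rw [hshift]
  exact (HasDerivAt.comp_sub_const (x + n • c) (n • c)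
    (by rwa [add_sub_cancel_right])).const_smul (n.negOnePow : ℤ)

theorem Function.Antiperiodic.hasDerivAt_of_forall_mem_Ioc {F : Type*} [NormedAddCommGroup F]
    [NormedSpace ℝ F] {f g : ℝ → F} {a c : ℝ} (hc : 0 < c) (hf : Antiperiodic f c)
    (hg : Antiperiodic g c) (h : ∀ s ∈ Ioc a (a + c), HasDerivAt f (g s) s) (t : ℝ) :
    HasDerivAt f (g t) t := by
  obtain ⟨n, hn, -⟩ := existsUnique_add_zsmul_mem_Ioc hc t a
  have := hf.hasDerivAt_add_zsmul (h _ hn) (-n)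
  rwa [← hg.add_zsmul_eq, neg_zsmul, add_neg_cancel_right] at this

theorem AddCircle.norm_add_half_period {p : ℝ} (hp : 0 < p) (x : AddCircle p) :
    ‖x + ↑(p / 2)‖ = p / 2 - ‖x‖ := by
  have hnorm {w : ℝ} (hw : |w| ≤ p / 2) : ‖(w : AddCircle p)‖ = |w| :=
    (norm_coe_eq_abs_iff p hp.ne').2 (by rwa [abs_of_pos hp])
  induction x using QuotientAddGroup.induction_on with | H y => ?_
  obtain ⟨n, ⟨hn₁, hn₂⟩, -⟩ := existsUnique_add_zsmul_mem_Ico hp y (-(p / 2))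
  have hy : ((y + n • p : ℝ) : AddCircle p) = y := by
    rw [coe_add, coe_zsmul, coe_period, smul_zero, add_zero]
  set z := y + n • p
  rw [← hy, ← coe_add, hnorm (abs_le.2 ⟨hn₁, by linarith⟩)]
  rcases le_or_gt 0 z with hz | hz
  · have hshift : ((z + p / 2 : ℝ) : AddCircle p) = ((z - p / 2 : ℝ) : AddCircle p) := by
      rw [← coe_add_period (p := p) (z - p / 2)]
      ring_nf
    rw [hshift, hnorm (abs_le.2 ⟨by linarith, by linarith⟩), abs_of_nonpos (by linarith),
      abs_of_nonneg hz]
    ring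
  · rw [hnorm (abs_le.2 ⟨by linarith, by linarith⟩), abs_of_nonneg (by linarith),
      abs_of_neg hz]
    ring

noncomputable def triangleWave (a t : ℝ) : ℝ := ‖((t - a : ℝ) : AddCircle (4 * a))‖ - a

section TriangleWave

variable {a : ℝ}

theorem lipschitzWith_triangleWave : LipschitzWith 1 (triangleWave a) := by
  refine LipschitzWith.of_dist_le_mul fun x y => ?_
  rw [NNReal.coe_one, one_mul, dist_eq, dist_eq, triangleWave, triangleWave,
    sub_sub_sub_cancel_right]
  calc _ ≤ ‖((x - a : ℝ) : AddCircle (4 * a)) - ((y - a : ℝ) : AddCircle (4 * a))‖ :=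
        abs_norm_sub_norm_le _ _
    _ ≤ |x - y| := by
      rw [← AddCircle.coe_sub, sub_sub_sub_cancel_right]
      exact QuotientAddGroup.norm_mk_le_norm

theorem triangleWave_of_abs_le (ha : 0 < a) {t : ℝ} (ht : |t| ≤ a) : triangleWave a t = -t := by
  obtain ⟨ht₁, ht₂⟩ := abs_le.1 ht
  have hdist : |t - a| = a - t := by rw [abs_of_nonpos (by linarith), neg_sub]
  have hnorm : ‖((t - a : ℝ) : AddCircle (4 * a))‖ = |t - a| :=
    (AddCircle.norm_coe_eq_abs_iff _ (by positivity)).2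
      (by rw [hdist, abs_of_pos (by positivity)]; linarith)
  rw [triangleWave, hnorm, hdist]
  ring

theorem antiperiodic_triangleWave (ha : 0 < a) : Antiperiodic (triangleWave a) (2 * a) := by
  intro t
  have h := AddCircle.norm_add_half_period (by positivity : 0 < 4 * a)
    ((t - a : ℝ) : AddCircle (4 * a))
  rw [← AddCircle.coe_add] at h
  rw [triangleWave, triangleWave, show t + 2 * a - a = t - a + 4 * a / 2 by ring, h]
  ring

theorem abs_triangleWave_le (ha : 0 < a) (t : ℝ) : |triangleWave a t| ≤ a := by
  have hle := AddCircle.norm_le_half_period (4 * a) (x := ((t - a : ℝ) : AddCircle (4 * a)))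
    (by positivity)
  rw [abs_of_pos (by positivity)] at hle
  rw [triangleWave, abs_le]
  constructor <;> linarith [norm_nonneg ((t - a : ℝ) : AddCircle (4 * a))]

end TriangleWave

theorem hasDerivAt_neg_self_of_mem_Ioc {q : ℝ → ℝ}
    (hval : ∀ t : ℝ, |t| ≤ √2 → q t = 1 - t ^ 2 / 2) (hanti : Antiperiodic q (2 * √2))
    {s : ℝ} (hs : s ∈ Ioc (-√2) √2) : HasDerivAt q (-s) s := by
  have hpoly (x : ℝ) : HasDerivAt (fun u : ℝ => 1 - u ^ 2 / 2) (-x) x := by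
    simpa using ((hasDerivAt_pow 2 x).div_const 2).const_sub 1
  have hsqrt : 0 < √2 := by positivity
  rcases hs.2.lt_or_eq with hlt | rfl
  · refine (hpoly s).congr_of_eventuallyEq ?_
    filter_upwards [Ioo_mem_nhds hs.1 hlt] with u hu using hval u (abs_le.2 ⟨hu.1.le, hu.2.le⟩)
  · have hleft : HasDerivWithinAt q (-√2) (Iic √2) √2 := by
      refine (hpoly √2).hasDerivWithinAt.congr_of_eventuallyEq ?_ (hval _ (abs_of_pos hsqrt).le)
      filter_upwards [Ioc_mem_nhdsLE (by linarith : -√2 < √2)] with u hu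
      exact hval u (abs_le.2 ⟨hu.1.le, hu.2⟩)
    have hright : HasDerivWithinAt q (-√2) (Ici √2) √2 := by
      have hrefl : HasDerivAt (fun u => -(1 - (u - 2 * √2) ^ 2 / 2)) (-√2) √2 :=
        (HasDerivAt.comp_sub_const √2 (2 * √2) (hpoly _)).fun_neg.congr_deriv (by ring)
      refine hrefl.hasDerivWithinAt.congr_of_eventuallyEq ?_ ?_
      · filter_upwards [Ico_mem_nhdsGE (by linarith : √2 < 3 * √2)] with u hu
        rw [← hval _ (abs_le.2 ⟨by linarith [hu.1], by linarith [hu.2]⟩), hanti.sub_eq,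
          neg_neg]
      · rw [← hval _ (abs_le.2 ⟨by linarith, by linarith⟩), hanti.sub_eq, neg_neg]
    simpa using hleft.union hright

theorem hasDerivAt_triangleWave {q : ℝ → ℝ}
    (hval : ∀ t : ℝ, |t| ≤ √2 → q t = 1 - t ^ 2 / 2) (hanti : Antiperiodic q (2 * √2))
    (t : ℝ) :
    HasDerivAt q (triangleWave √2 t) t := by
  refine hanti.hasDerivAt_of_forall_mem_Ioc (a := -√2) (by positivity)
    (antiperiodic_triangleWave (by positivity)) (fun s hs => ?_) t
  rw [show -√2 + 2 * √2 = √2 by ring] at hs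
  rw [triangleWave_of_abs_le (by positivity) (abs_le.2 ⟨hs.1.le, hs.2⟩)]
  exact hasDerivAt_neg_self_of_mem_Ioc hval hanti hs

theorem abs_eq_one_sub_triangleWave_sq {q : ℝ → ℝ}
    (hval : ∀ t : ℝ, |t| ≤ √2 → q t = 1 - t ^ 2 / 2) (hanti : Antiperiodic q (2 * √2))
    (t : ℝ) :
    |q t| = 1 - triangleWave √2 t ^ 2 / 2 := by
  have hper : Periodic (fun t => |q t| + triangleWave √2 t ^ 2 / 2) (2 * √2) := fun t => by
    simp only [hanti t, antiperiodic_triangleWave (by positivity : (0 : ℝ) < √2) t, abs_neg,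
      neg_sq]
  obtain ⟨s, hs, hts⟩ := hper.exists_mem_Ioc (by positivity) t (-√2)
  have hs' : |s| ≤ √2 := abs_le.2 ⟨hs.1.le, by linarith [hs.2]⟩
  have hs2 : s ^ 2 ≤ 2 := by
    simpa using sq_le_sq.2 (hs'.trans_eq (abs_of_pos (by positivity : (0 : ℝ) < √2)).symm)
  have hsum : |q s| + triangleWave √2 s ^ 2 / 2 = 1 := by
    rw [hval s hs', triangleWave_of_abs_le (by positivity) hs', abs_of_nonneg (by linarith)]
    ring
  linarith

theorem comparison_function_properties_general (q : ℝ → ℝ)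
    (hval : ∀ t : ℝ, |t| ≤ Real.sqrt 2 → q t = 1 - t ^ 2 / 2)
    (hanti : ∀ t : ℝ, q (t + 2 * Real.sqrt 2) = -q t) :
    Differentiable ℝ q ∧
    LipschitzWith 1 (deriv q) ∧
    IsGreatest (Set.range fun t => |q t|) 1 ∧
    IsGreatest (Set.range fun t => |deriv q t|) (Real.sqrt 2) ∧
    ∀ t : ℝ, |q t| = 1 - (deriv q t) ^ 2 / 2 := by
  have hsqrt : (0 : ℝ) < √2 := by positivity
  have hderiv : deriv q = triangleWave √2 :=
    funext fun t => (hasDerivAt_triangleWave hval hanti t).deriv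
  have hode := abs_eq_one_sub_triangleWave_sq hval hanti
  refine ⟨fun t => (hasDerivAt_triangleWave hval hanti t).differentiableAt,
    hderiv ▸ lipschitzWith_triangleWave, ⟨⟨0, ?_⟩, ?_⟩, ⟨⟨√2, ?_⟩, ?_⟩,
    hderiv ▸ hode⟩
  · simp [hval 0 (by simp)]
  · rintro _ ⟨t, rfl⟩
    linarith [hode t, sq_nonneg (triangleWave √2 t)]
  · simp [hderiv, triangleWave_of_abs_le hsqrt (abs_of_pos hsqrt).le]
  · rintro _ ⟨t, rfl⟩
    exact hderiv ▸ abs_triangleWave_le hsqrt t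

/-- Properties of the comparison function `q`: the `4√2`-periodic function
with `q(t) = 1 - t²/2` for `|t| ≤ √2` and `q(t + 2√2) = -q(t)` is
differentiable on `ℝ`, its derivative is Lipschitz of constant `1`,
`‖q‖_∞ = 1`, `‖q'‖_∞ = √2`, and `|q(t)| = 1 - q'(t)²/2` for all `t`. -/
theorem comparison_function_properties (q : ℝ → ℝ)
    (hper : Function.Periodic q (4 * Real.sqrt 2))
    (hval : ∀ t : ℝ, |t| ≤ Real.sqrt 2 → q t = 1 - t ^ 2 / 2)
    (hanti : ∀ t : ℝ, q (t + 2 * Real.sqrt 2) = -q t) :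
    Differentiable ℝ q ∧
    LipschitzWith 1 (deriv q) ∧
    IsGreatest (Set.range fun t => |q t|) 1 ∧
    IsGreatest (Set.range fun t => |deriv q t|) (Real.sqrt 2) ∧
    ∀ t : ℝ, |q t| = 1 - (deriv q t) ^ 2 / 2 :=
  comparison_function_properties_general q hval hanti
end

section
/- Let $T \ge 2\sqrt 2$, let $t_0$ satisfy $\sqrt 2 \le t_0 \le T - \sqrt 2$, let $f \in \mathcal{L}_2(T)$ and $t_1 \in \mathbb{R}$. If $f(t_0) = q(t_1)$ then $|f'(t_0)| \le |q'(t_1)|$. -/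
open Set Real

lemma le_of_hasDerivWithinAt_of_sign {s : Set ℝ} (hs : s.OrdConnected) {g g' : ℝ → ℝ}
    (hd : ∀ y ∈ s, HasDerivWithinAt g (g' y) s y) {c x : ℝ}
    (hright : ∀ y ∈ s, c < y → 0 ≤ g' y) (hleft : ∀ y ∈ s, y < c → g' y ≤ 0)
    (hc : c ∈ s) (hx : x ∈ s) : g c ≤ g x := by
  have hcont : ContinuousOn g s := fun y hy => (hd y hy).continuousWithinAt
  have hderiv {a b : ℝ} (hsub : Icc a b ⊆ s) :
      ∀ y ∈ interior (Icc a b), HasDerivWithinAt g (g' y) (interior (Icc a b)) y :=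
    fun y hy => (hd y (hsub (interior_subset hy))).mono (interior_subset.trans hsub)
  rcases le_total c x with hcx | hxc
  · have hsub := hs.out hc hx
    refine monotoneOn_of_hasDerivWithinAt_nonneg (convex_Icc c x) (hcont.mono hsub) (hderiv hsub)
      (fun y hy => ?_) (left_mem_Icc.2 hcx) (right_mem_Icc.2 hcx) hcx
    rw [interior_Icc] at hy
    exact hright y (hsub (Ioo_subset_Icc_self hy)) hy.1
  · have hsub := hs.out hx hc
    refine antitoneOn_of_hasDerivWithinAt_nonpos (convex_Icc x c) (hcont.mono hsub) (hderiv hsub)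
      (fun y hy => ?_) (left_mem_Icc.2 hxc) (right_mem_Icc.2 hxc) hxc
    rw [interior_Icc] at hy
    exact hleft y (hsub (Ioo_subset_Icc_self hy)) hy.2

theorem abs_sub_sub_mul_le_of_lipschitzOnWith_deriv_s12 {s : Set ℝ} (hs : s.OrdConnected)
    {f f' : ℝ → ℝ} (hd : ∀ x ∈ s, HasDerivWithinAt f (f' x) s x) (hlip : LipschitzOnWith 1 f' s)
    {a u : ℝ} (ha : a ∈ s) (hu : u ∈ s) :
    |f u - f a - f' a * (u - a)| ≤ (u - a) ^ 2 / 2 := by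
  -- For `|σ| ≤ 1`, `(x - a)²/2 - σ (f x - f a - f' a (x - a))` is minimal at `a`: its derivative
  -- has the sign of `x - a`.
  have signed : ∀ σ : ℝ, |σ| ≤ 1 → σ * (f u - f a - f' a * (u - a)) ≤ (u - a) ^ 2 / 2 := by
    intro σ hσ
    have hslope : ∀ y ∈ s, |σ * (f' y - f' a)| ≤ |y - a| := by
      intro y hy
      have hy' : |f' y - f' a| ≤ |y - a| := by
        simpa [Real.dist_eq] using hlip.dist_le_mul y hy a ha
      rw [abs_mul]
      nlinarith [abs_nonneg σ, abs_nonneg (f' y - f' a)]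
    have hg : ∀ y ∈ s, HasDerivWithinAt
        (fun x => (x - a) ^ 2 / 2 - σ * (f x - f a - f' a * (x - a)))
        ((y - a) - σ * (f' y - f' a)) s y := by
      intro y hy
      have hsq := (((hasDerivAt_id' y).sub_const a).pow 2).div_const 2
      have hlin := ((hasDerivAt_id' y).sub_const a).const_mul (f' a)
      refine (hsq.hasDerivWithinAt.sub
        ((((hd y hy).sub_const (f a)).sub hlin.hasDerivWithinAt).const_mul σ)).congr_deriv ?_
      push_cast; ring
    have := le_of_hasDerivWithinAt_of_sign hs hg
      (fun y hy hay => by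
        have := abs_le.1 (hslope y hy); rw [abs_of_pos (sub_pos.2 hay)] at this; linarith)
      (fun y hy hya => by
        have := abs_le.1 (hslope y hy); rw [abs_of_neg (sub_neg.2 hya)] at this; linarith)
      ha hu
    simp only [sub_self, mul_zero] at this
    linarith
  exact abs_le.2 ⟨by linarith [signed (-1) (by norm_num)], by linarith [signed 1 (by norm_num)]⟩

theorem sq_le_two_mul_one_sub_abs_of_inL2 {T t₀ : ℝ} {f f' : ℝ → ℝ} (hf : InL2 T f f')
    (ht₀ : √2 ≤ t₀) (ht₀' : t₀ ≤ T - √2) : f' t₀ ^ 2 ≤ 2 * (1 - |f t₀|) := by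
  obtain ⟨hd, hbdd, hlip⟩ := hf
  have hr0 : 0 < √2 := by positivity
  have hmem : ∀ h, |h| ≤ √2 → t₀ + h ∈ Icc 0 T := fun h hh => by
    obtain ⟨h1, h2⟩ := abs_le.1 hh; constructor <;> linarith
  have htaylor : ∀ h, |h| ≤ √2 → |f (t₀ + h) - f t₀ - f' t₀ * h| ≤ h ^ 2 / 2 := fun h hh => by
    have := abs_sub_sub_mul_le_of_lipschitzOnWith_deriv_s12 ordConnected_Icc hd hlip
      (a := t₀) ⟨by linarith, by linarith⟩ (hmem h hh)
    rwa [add_sub_cancel_left] at this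
  have hstep : ∀ h, 0 ≤ h → h ≤ √2 → |f' t₀| * h - h ^ 2 / 2 ≤ 1 - |f t₀| := by
    intro h h0 h1
    have hh : |h| ≤ √2 := by rwa [abs_of_nonneg h0]
    have hh' : |-h| ≤ √2 := by rwa [abs_neg]
    have hfwd := abs_le.1 (htaylor h hh)
    have hbwd := abs_le.1 (htaylor (-h) hh')
    have hbdd_fwd := abs_le.1 (hbdd _ (hmem h hh))
    have hbdd_bwd := abs_le.1 (hbdd _ (hmem (-h) hh'))
    rcases abs_cases (f' t₀) with ⟨ha, _⟩ | ⟨ha, _⟩ <;>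
      rcases abs_cases (f t₀) with ⟨hb, _⟩ | ⟨hb, _⟩ <;> rw [ha, hb] <;>
      nlinarith
  have hsmall : |f' t₀| ≤ √2 := by
    nlinarith [hstep √2 hr0.le le_rfl, abs_nonneg (f t₀), sq_sqrt zero_le_two]
  nlinarith [hstep |f' t₀| (abs_nonneg _) hsmall, sq_abs (f' t₀)]

section Comparison

variable {q : ℝ → ℝ}

lemma hasDerivAt_neg_of_mem_Ico (hval : ∀ t : ℝ, |t| ≤ √2 → q t = 1 - t ^ 2 / 2)
    (hanti : ∀ t : ℝ, q (t + 2 * √2) = -q t) {s : ℝ} (hs : s ∈ Ico (-√2) √2) :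
    HasDerivAt q (-s) s := by
  have hr0 : 0 < √2 := by positivity
  have hmid : ∀ t ∈ Icc (-√2) √2, q t = 1 - t ^ 2 / 2 := fun t ht => hval t (abs_le.2 ht)
  have hmid_deriv : HasDerivAt (fun t => 1 - t ^ 2 / 2) (-s) s := by
    simpa using ((hasDerivAt_pow 2 s).div_const 2).const_sub 1
  rcases hs.1.lt_or_eq with hlt | rfl
  · exact (hmid_deriv.hasDerivWithinAt.congr_of_mem hmid ⟨hlt.le, hs.2.le⟩).hasDerivAt
      (Icc_mem_nhds hlt hs.2)
  -- At `-√2` the arc `1 - t²/2` meets the arc `(t + 2√2)²/2 - 1` with the same slope.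
  · have hleft : ∀ t ∈ Icc (-(3 * √2)) (-√2), q t = (t + 2 * √2) ^ 2 / 2 - 1 := fun t ht => by
      have := hanti t
      rw [hval _ (abs_le.2 ⟨by linarith [ht.1], by linarith [ht.2]⟩)] at this
      linarith
    have hleft_deriv : HasDerivAt (fun t => (t + 2 * √2) ^ 2 / 2 - 1) (-(-√2)) (-√2) := by
      refine ((((hasDerivAt_id' _).add_const _).pow 2).div_const 2 |>.sub_const 1).congr_deriv ?_
      push_cast; ring
    have hglued := (hleft_deriv.hasDerivWithinAt.congr_of_mem hleft ⟨by linarith, le_rfl⟩).union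
      (hmid_deriv.hasDerivWithinAt.congr_of_mem hmid ⟨le_rfl, by linarith⟩)
    rw [Icc_union_Icc_eq_Icc (by linarith) (by linarith)] at hglued
    exact hglued.hasDerivAt (Icc_mem_nhds (by linarith) (by linarith))

lemma deriv_add_two_mul_sqrt_two (hanti : ∀ t : ℝ, q (t + 2 * √2) = -q t) (t : ℝ) :
    deriv q (t + 2 * √2) = -deriv q t := by
  rw [← deriv_comp_add_const, funext hanti]
  exact deriv.neg

lemma sq_deriv_eq_two_mul_one_sub_abs (hval : ∀ t : ℝ, |t| ≤ √2 → q t = 1 - t ^ 2 / 2)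
    (hanti : ∀ t : ℝ, q (t + 2 * √2) = -q t) (t : ℝ) :
    deriv q t ^ 2 = 2 * (1 - |q t|) := by
  have hper : Function.Periodic (fun t => deriv q t ^ 2 - 2 * (1 - |q t|)) (2 * √2) := fun t => by
    simp only [deriv_add_two_mul_sqrt_two hanti, hanti, neg_sq, abs_neg]
  obtain ⟨s, ⟨hs₁, hs₂⟩, hts⟩ := hper.exists_mem_Ico (by positivity) t (-√2)
  rw [← sub_eq_zero]
  refine hts.trans ?_
  have hs : |s| ≤ √2 := abs_le.2 ⟨hs₁, by linarith⟩
  have hs2 : s ^ 2 ≤ 2 := by simpa using sq_le_sq' (abs_le.1 hs).1 (abs_le.1 hs).2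
  rw [(hasDerivAt_neg_of_mem_Ico hval hanti ⟨hs₁, by linarith⟩).deriv, hval s hs,
    abs_of_nonneg (by linarith)]
  ring

end Comparison

theorem comparison_property_general (q : ℝ → ℝ)
    (hval : ∀ t : ℝ, |t| ≤ Real.sqrt 2 → q t = 1 - t ^ 2 / 2)
    (hanti : ∀ t : ℝ, q (t + 2 * Real.sqrt 2) = -q t)
    (T t₀ : ℝ)
    (ht₀ : Real.sqrt 2 ≤ t₀) (ht₀' : t₀ ≤ T - Real.sqrt 2)
    (f f' : ℝ → ℝ) (hf : InL2 T f f') (t₁ : ℝ) (heq : f t₀ = q t₁) :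
    |f' t₀| ≤ |deriv q t₁| := by
  rw [← sq_le_sq, sq_deriv_eq_two_mul_one_sub_abs hval hanti, ← heq]
  exact sq_le_two_mul_one_sub_abs_of_inL2 hf ht₀ ht₀'

/-- **Comparison property of `q`.** Let `T ≥ 2√2`, `√2 ≤ t₀ ≤ T - √2`,
`f ∈ 𝓛₂(T)` and `t₁ ∈ ℝ`. If `f(t₀) = q(t₁)` then `|f'(t₀)| ≤ |q'(t₁)|`,
where `q` is the `4√2`-periodic comparison function with `q(t) = 1 - t²/2`
for `|t| ≤ √2` and `q(t + 2√2) = -q(t)`. -/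
theorem comparison_property (q : ℝ → ℝ)
    (hper : Function.Periodic q (4 * Real.sqrt 2))
    (hval : ∀ t : ℝ, |t| ≤ Real.sqrt 2 → q t = 1 - t ^ 2 / 2)
    (hanti : ∀ t : ℝ, q (t + 2 * Real.sqrt 2) = -q t)
    (T t₀ : ℝ) (hT : 2 * Real.sqrt 2 ≤ T)
    (ht₀ : Real.sqrt 2 ≤ t₀) (ht₀' : t₀ ≤ T - Real.sqrt 2)
    (f f' : ℝ → ℝ) (hf : InL2 T f f') (t₁ : ℝ) (heq : f t₀ = q t₁) :
    |f' t₀| ≤ |deriv q t₁| :=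
  comparison_property_general q hval hanti T t₀ ht₀ ht₀' f f' hf t₁ heq
end

section
/- For $0 < T \le 2$, $\sup_{f \in \mathcal{L}_2(T)} \int_0^T |f'(t)|\, dt = 2$. -/
/-!
If `f'` vanishes at some `t₀`, then `|f' t| ≤ |t - t₀|`, so the variation is at most
`(t₀² + (T - t₀)²) / 2 ≤ T² / 2 ≤ 2`. Otherwise `f'` has constant sign and the variation is
`|f T - f 0| ≤ 2`. The affine map from `-1` to `1` attains the bound.
-/

open Set MeasureTheory intervalIntegral

open scoped NNReal

theorem IsPreconnected.forall_pos_or_forall_neg {α : Type*} [TopologicalSpace α] {s : Set α}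
    {g : α → ℝ} (hs : IsPreconnected s) (hg : ContinuousOn g s) (h0 : ∀ x ∈ s, g x ≠ 0) :
    (∀ x ∈ s, 0 < g x) ∨ (∀ x ∈ s, g x < 0) := by
  by_contra! ⟨⟨a, ha, hga⟩, ⟨b, hb, hgb⟩⟩
  obtain ⟨c, hc, hgc⟩ := hs.intermediate_value ha hb hg ⟨hga, hgb⟩
  exact h0 c hc hgc

theorem integral_abs_deriv_eq_abs_sub_of_ne_zero {f f' : ℝ → ℝ} {a b : ℝ} (hab : a ≤ b)
    (hf : ∀ t ∈ Icc a b, HasDerivWithinAt f (f' t) (Icc a b) t)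
    (hf' : ContinuousOn f' (Icc a b)) (h0 : ∀ t ∈ Icc a b, f' t ≠ 0) :
    ∫ t in a..b, |f' t| = |f b - f a| := by
  have ftc : ∫ t in a..b, f' t = f b - f a :=
    integral_eq_sub_of_hasDeriv_right_of_le hab (fun t ht => (hf t ht).continuousWithinAt)
      (fun t ht => ((hf t (Ioo_subset_Icc_self ht)).hasDerivAt
        (Icc_mem_nhds ht.1 ht.2)).hasDerivWithinAt)
      (hf'.intervalIntegrable_of_Icc hab)
  have hcongr {g : ℝ → ℝ} (hg : ∀ t ∈ Icc a b, |f' t| = g t) :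
      ∫ t in a..b, |f' t| = ∫ t in a..b, g t :=
    integral_congr fun t ht => hg t (by rwa [uIcc_of_le hab] at ht)
  rw [← ftc]
  rcases isPreconnected_Icc.forall_pos_or_forall_neg hf' h0 with hpos | hneg
  · rw [hcongr fun t ht => abs_of_pos (hpos t ht),
      abs_of_nonneg (integral_nonneg hab fun t ht => (hpos t ht).le)]
  · rw [hcongr fun t ht => abs_of_neg (hneg t ht),
      ← abs_of_nonneg (integral_nonneg hab fun t ht => (neg_pos.2 (hneg t ht)).le),
      intervalIntegral.integral_neg, abs_neg]

theorem integral_abs_sub_of_mem_Icc {a b t₀ : ℝ} (ht₀ : t₀ ∈ Icc a b) :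
    ∫ t in a..b, |t - t₀| = ((t₀ - a) ^ 2 + (b - t₀) ^ 2) / 2 := by
  have hint (c d : ℝ) : IntervalIntegrable (fun t => |t - t₀|) volume c d :=
    (continuous_id.sub continuous_const).abs.intervalIntegrable c d
  have hleft : ∫ t in a..t₀, |t - t₀| = ∫ t in a..t₀, (t₀ - t) :=
    integral_congr fun t ht => by
      rw [uIcc_of_le ht₀.1] at ht
      exact (abs_of_nonpos (by linarith [ht.2])).trans (neg_sub _ _)
  have hright : ∫ t in t₀..b, |t - t₀| = ∫ t in t₀..b, (t - t₀) :=
    integral_congr fun t ht => by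
      rw [uIcc_of_le ht₀.2] at ht
      exact abs_of_nonneg (by linarith [ht.1])
  rw [← integral_add_adjacent_intervals (hint a t₀) (hint t₀ b), hleft, hright,
    integral_sub intervalIntegrable_const intervalIntegrable_id,
    integral_sub intervalIntegrable_id intervalIntegrable_const, integral_id, integral_id,
    intervalIntegral.integral_const, intervalIntegral.integral_const, smul_eq_mul, smul_eq_mul]
  ring

theorem integral_abs_le_of_lipschitzOnWith_of_eq_zero {g : ℝ → ℝ} {K : ℝ≥0} {a b t₀ : ℝ}
    (hg : LipschitzOnWith K g (Icc a b)) (ht₀ : t₀ ∈ Icc a b) (hgt₀ : g t₀ = 0) :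
    ∫ t in a..b, |g t| ≤ K * (b - a) ^ 2 / 2 := by
  have hab : a ≤ b := ht₀.1.trans ht₀.2
  calc ∫ t in a..b, |g t|
      ≤ ∫ t in a..b, K * |t - t₀| := by
        refine integral_mono_on hab (hg.continuousOn.abs.intervalIntegrable_of_Icc hab)
          ((continuous_const.mul (continuous_id.sub continuous_const).abs).intervalIntegrable a b)
          fun t ht => ?_
        simpa [Real.dist_eq, hgt₀] using hg.dist_le_mul t ht t₀ ht₀
    _ = K * (((t₀ - a) ^ 2 + (b - t₀) ^ 2) / 2) := by
        rw [intervalIntegral.integral_const_mul, integral_abs_sub_of_mem_Icc ht₀]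
    _ ≤ K * (b - a) ^ 2 / 2 := by
        rw [mul_div_assoc]
        gcongr
        nlinarith [mul_nonneg (sub_nonneg.2 ht₀.1) (sub_nonneg.2 ht₀.2)]

theorem inL2_two_div_mul_sub_one {T : ℝ} (hT : 0 < T) :
    InL2 T (fun t => 2 / T * t - 1) fun _ => 2 / T := by
  refine ⟨fun t _ => ?_, fun t ht => ?_, (LipschitzWith.const _).lipschitzOnWith.weaken bot_le⟩
  · simpa using (((hasDerivAt_id t).const_mul (2 / T)).sub_const 1).hasDerivWithinAt
  · have hslope : 2 / T * t ≤ 2 := by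
      calc 2 / T * t ≤ 2 / T * T := by gcongr; exact ht.2
        _ = 2 := div_mul_cancel₀ 2 hT.ne'
    rw [abs_le]
    constructor <;> nlinarith [mul_nonneg (div_pos two_pos hT).le ht.1]

/-- For `0 < T ≤ 2`, the supremum of the total variation
`∫₀ᵀ |f'(t)| dt` over `f ∈ 𝓛₂(T)` equals `2` (and it is attained). -/
theorem total_variation_sup_small_T (T : ℝ) (hT0 : 0 < T) (hT2 : T ≤ 2) :
    IsGreatest {y : ℝ | ∃ f f' : ℝ → ℝ, InL2 T f f' ∧
        y = ∫ t in (0:ℝ)..T, |f' t|} 2 := by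
  refine ⟨⟨_, _, inL2_two_div_mul_sub_one hT0, ?_⟩, ?_⟩
  · rw [intervalIntegral.integral_const, smul_eq_mul, abs_of_pos (by positivity)]
    field_simp
    ring
  rintro y ⟨f, f', ⟨hf, hf_le, hf'⟩, rfl⟩
  by_cases hz : ∃ t₀ ∈ Icc 0 T, f' t₀ = 0
  · obtain ⟨t₀, ht₀, hf't₀⟩ := hz
    calc ∫ t in (0:ℝ)..T, |f' t| ≤ (1 : ℝ≥0) * (T - 0) ^ 2 / 2 :=
          integral_abs_le_of_lipschitzOnWith_of_eq_zero hf' ht₀ hf't₀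
      _ ≤ 2 := by push_cast; nlinarith
  · push Not at hz
    rw [integral_abs_deriv_eq_abs_sub_of_ne_zero hT0.le hf hf'.continuousOn hz]
    calc |f T - f 0| ≤ |f T| + |f 0| := abs_sub _ _
      _ ≤ 2 := by linarith [hf_le T ⟨hT0.le, le_rfl⟩, hf_le 0 ⟨le_rfl, hT0.le⟩]
end

section
/- Let $f : \mathbb{R} \to \mathbb{R}$ be differentiable with $|f| \le 1$, $f'$ Lipschitz of constant $1$, and $f'$ compactly supported. Then $\int_{-\sqrt 2}^{\sqrt 2} |f'(t)|\, dt \le 2$. -/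
/-!
Split `[-√2, √2]` at the first and last zeros `α ≤ β` of `f'`. Since `f'` is `1`-Lipschitz and
vanishes at `α` and `β`, the middle piece contributes at most `(β - α)² / 4`. On each outer piece
`f'` keeps its sign, so the piece contributes the variation `v` of `f` there, achieved starting
from rest. With acceleration at most `1` and `|f| ≤ 1` this takes time at least `riseTime v`:
for `v ≤ 1` by the Lipschitz bound alone, and beyond that because the energy bound
`f'² ≤ 2 (1 - f)` makes `√(2 (1 - f))` `1`-Lipschitz. The three lengths add up to `2√2`, and
maximising `v_L + (β - α)² / 4 + v_R` under this constraint gives `2`.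
-/

open Set MeasureTheory intervalIntegral Real

open scoped NNReal Topology

theorem abs_integral_sub_mul_le {g : ℝ → ℝ} {K : ℝ≥0} (hg : LipschitzWith K g) {a b : ℝ}
    (hab : a ≤ b) : |(∫ t in a..b, g t) - (b - a) * g a| ≤ K * (b - a) ^ 2 / 2 := by
  have hgi : ∀ c d, IntervalIntegrable g volume c d := hg.continuous.intervalIntegrable
  calc |(∫ t in a..b, g t) - (b - a) * g a| = |∫ t in a..b, (g t - g a)| := by
        rw [integral_sub (hgi a b) intervalIntegrable_const, intervalIntegral.integral_const,
          smul_eq_mul]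
    _ ≤ ∫ t in a..b, |g t - g a| := abs_integral_le_integral_abs hab
    _ ≤ ∫ t in a..b, (K * (t - a) : ℝ) := by
        refine integral_mono_on hab
          ((hg.continuous.sub continuous_const).abs.intervalIntegrable _ _)
          (Continuous.intervalIntegrable (by fun_prop) _ _) fun t ht => ?_
        simpa [Real.dist_eq, abs_of_nonneg (sub_nonneg.2 ht.1)] using hg.dist_le_mul t a
    _ = K * (b - a) ^ 2 / 2 := by simp; ring

theorem integral_abs_le_of_eq_zero_left {g : ℝ → ℝ} {K : ℝ≥0} (hg : LipschitzWith K g)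
    {a b : ℝ} (hab : a ≤ b) (ha : g a = 0) : ∫ t in a..b, |g t| ≤ K * (b - a) ^ 2 / 2 := by
  have := abs_integral_sub_mul_le (lipschitzWith_one_norm.comp hg) hab
  simp only [Function.comp_apply, Real.norm_eq_abs, ha, abs_zero, mul_zero, sub_zero,
    one_mul] at this
  exact (le_abs_self _).trans this

theorem integral_abs_le_of_eq_zero_of_eq_zero {g : ℝ → ℝ} {K : ℝ≥0} (hg : LipschitzWith K g)
    {a b : ℝ} (hab : a ≤ b) (ha : g a = 0) (hb : g b = 0) :
    ∫ t in a..b, |g t| ≤ K * (b - a) ^ 2 / 4 := by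
  obtain ⟨m, hm⟩ : ∃ m, m = (a + b) / 2 := ⟨_, rfl⟩
  have hgi : ∀ c d, IntervalIntegrable (fun t => |g t|) volume c d :=
    hg.continuous.abs.intervalIntegrable
  have hleft := integral_abs_le_of_eq_zero_left hg (show a ≤ m by linarith) ha
  have hright := integral_abs_le_of_eq_zero_left (hg.comp LipschitzWith.id.neg)
    (show -b ≤ -m by linarith) (by simpa using hb)
  simp only [Function.comp_apply, Pi.neg_apply, id, mul_one] at hright
  rw [integral_comp_neg (fun t => |g t|), neg_neg, neg_neg] at hright
  rw [← integral_add_adjacent_intervals (hgi a m) (hgi m b)]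
  subst hm
  linarith

theorem Continuous.nonneg_or_nonpos_of_ne_zero {g : ℝ → ℝ} (hg : Continuous g) {a b : ℝ}
    (hab : a ≤ b) (hne : ∀ t ∈ Ioo a b, g t ≠ 0) :
    (∀ t ∈ Icc a b, 0 ≤ g t) ∨ (∀ t ∈ Icc a b, g t ≤ 0) := by
  rcases hab.eq_or_lt with rfl | hlt
  · simpa only [Icc_self, mem_singleton_iff, forall_eq] using le_total 0 (g a)
  have hIoo : (∀ t ∈ Ioo a b, 0 ≤ g t) ∨ (∀ t ∈ Ioo a b, g t ≤ 0) := by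
    by_contra! h
    obtain ⟨⟨x, hx, hgx⟩, y, hy, hgy⟩ := h
    obtain ⟨z, hz, hgz⟩ :=
      isPreconnected_Ioo.intermediate_value hx hy hg.continuousOn ⟨hgx.le, hgy.le⟩
    exact hne z hz hgz
  rw [← closure_Ioo hlt.ne]
  exact hIoo.imp (fun h => closure_minimal h (isClosed_le continuous_const hg))
    (fun h => closure_minimal h (isClosed_le hg continuous_const))

theorem Continuous.exists_first_last_zero {g : ℝ → ℝ} (hg : Continuous g) {a b : ℝ}
    (h : ∃ t ∈ Icc a b, g t = 0) :
    ∃ α β, a ≤ α ∧ α ≤ β ∧ β ≤ b ∧ g α = 0 ∧ g β = 0 ∧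
      (∀ t ∈ Ioo a α, g t ≠ 0) ∧ (∀ t ∈ Ioo β b, g t ≠ 0) := by
  have hZ : IsCompact (Icc a b ∩ g ⁻¹' {0}) :=
    isCompact_Icc.inter_right (isClosed_singleton.preimage hg)
  obtain ⟨α, ⟨hαI, hgα⟩, hαmin⟩ := hZ.exists_isLeast h
  obtain ⟨β, ⟨hβI, hgβ⟩, hβmax⟩ := hZ.exists_isGreatest h
  refine ⟨α, β, hαI.1, hαmin ⟨hβI, hgβ⟩, hβI.2, hgα, hgβ, fun t ht hgt => ?_, fun t ht hgt => ?_⟩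
  · exact (hαmin ⟨⟨ht.1.le, ht.2.le.trans hαI.2⟩, hgt⟩).not_gt ht.2
  · exact (hβmax ⟨⟨hβI.1.trans ht.1.le, ht.2.le⟩, hgt⟩).not_gt ht.1

theorem integral_abs_deriv_eq_abs_sub {f : ℝ → ℝ} (hf : Differentiable ℝ f)
    (hf' : Continuous (deriv f)) {a b : ℝ} (hab : a ≤ b) (hne : ∀ t ∈ Ioo a b, deriv f t ≠ 0) :
    ∫ t in a..b, |deriv f t| = |f b - f a| := by
  rw [← integral_deriv_eq_sub (fun t _ => hf t) (hf'.intervalIntegrable a b)]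
  rcases hf'.nonneg_or_nonpos_of_ne_zero hab hne with h | h
  · rw [abs_of_nonneg (integral_nonneg hab h)]
    refine integral_congr fun t ht => abs_of_nonneg (h t ?_)
    rwa [uIcc_of_le hab] at ht
  · rw [← abs_neg, ← intervalIntegral.integral_neg,
      abs_of_nonneg (integral_nonneg hab fun t ht => neg_nonneg.2 (h t ht))]
    refine integral_congr fun t ht => abs_of_nonpos (h t ?_)
    rwa [uIcc_of_le hab] at ht

theorem lipschitzWith_sqrt_of_sq_deriv_le {u : ℝ → ℝ} (hu : Differentiable ℝ u)
    (h : ∀ t, deriv u t ^ 2 ≤ 4 * u t) : LipschitzWith 1 fun t => √(u t) := by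
  have hu0 : ∀ t, 0 ≤ u t := fun t => by nlinarith [sq_nonneg (deriv u t), h t]
  -- `√u` may fail to be differentiable where `u = 0`, but `√(u + ε)` is `1`-Lipschitz for `ε > 0`
  have hε : ∀ ε > 0, ∀ p q, dist √(u p + ε) √(u q + ε) ≤ dist p q := by
    intro ε hε p q
    have hderiv : ∀ t, HasDerivAt (fun t => √(u t + ε)) (deriv u t / (2 * √(u t + ε))) t :=
      fun t => ((hu t).hasDerivAt.add_const ε).sqrt (by linarith [hu0 t])
    have hbound : ∀ t, ‖deriv (fun t => √(u t + ε)) t‖ ≤ 1 := fun t => by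
      have hpos : 0 < √(u t + ε) := sqrt_pos.2 (by linarith [hu0 t])
      rw [(hderiv t).deriv, Real.norm_eq_abs, abs_div, abs_of_pos (mul_pos two_pos hpos),
        div_le_one (mul_pos two_pos hpos)]
      refine abs_le_of_sq_le_sq ?_ (mul_pos two_pos hpos).le
      rw [mul_pow, sq_sqrt (by linarith [hu0 t])]
      linarith [h t]
    simpa [Real.dist_eq, abs_sub_comm] using
      convex_univ.norm_image_sub_le_of_norm_deriv_le (fun t _ => (hderiv t).differentiableAt)
        (fun t _ => hbound t) (mem_univ q) (mem_univ p)
  refine LipschitzWith.of_dist_le_mul fun p q => ?_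
  have hlim : Filter.Tendsto (fun ε => dist √(u p + ε) √(u q + ε)) (𝓝[>] 0)
      (𝓝 (dist √(u p) √(u q))) := by
    have hcont : Continuous fun ε => dist √(u p + ε) √(u q + ε) := by fun_prop
    simpa using (hcont.tendsto 0).mono_left nhdsWithin_le_nhds
  simpa using le_of_tendsto hlim (eventually_nhdsWithin_of_forall fun ε hε' => hε ε hε' p q)

theorem abs_sub_le_of_deriv_eq_zero {f : ℝ → ℝ} (hf : Differentiable ℝ f) {K : ℝ≥0}
    (hf' : LipschitzWith K (deriv f)) {a b : ℝ} (hab : a ≤ b) (ha : deriv f a = 0) :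
    |f b - f a| ≤ K * (b - a) ^ 2 / 2 := by
  rw [← integral_deriv_eq_sub (fun t _ => hf t) (hf'.continuous.intervalIntegrable a b)]
  exact (abs_integral_le_integral_abs hab).trans (integral_abs_le_of_eq_zero_left hf' hab ha)

theorem two_mul_sqrt_two_sub_le_sqrt {A B : ℝ} (hA : 0 ≤ A) (hA2 : A ≤ √2)
    (hAB : B ^ 2 ≤ 2 * A ^ 2 - 2) : 2 * √2 - (2 * A - B) ≤ √(4 - 2 * A ^ 2 + B ^ 2) := by
  have hs : √2 ^ 2 = 2 := sq_sqrt zero_le_two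
  rcases le_or_gt (2 * √2 - (2 * A - B)) 0 with h | h
  · exact h.trans (sqrt_nonneg _)
  have hA1 : 1 ≤ A := by nlinarith
  have hB3 : 2 * B ≤ 3 * A - √2 := by
    refine le_of_sq_le_sq ?_ (by nlinarith)
    nlinarith [mul_nonneg (sub_nonneg.2 hA2) (show 0 ≤ 5 * √2 - A by nlinarith)]
  rw [le_sqrt' h]
  nlinarith [mul_nonneg (sub_nonneg.2 hA2) (sub_nonneg.2 hB3)]

/-- Time a function of the class needs to vary by `v ∈ [0, 2]` starting at rest: the extremal one
accelerates at unit rate from `-1` to `0`, then brakes at unit rate up to `1`. -/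
noncomputable def riseTime (v : ℝ) : ℝ :=
  if v ≤ 1 then √(2 * v) else 2 * √2 - √(2 * (2 - v))

theorem add_sq_div_four_add_le_two_of_riseTime {v w m : ℝ} (hv : v ∈ Icc (0 : ℝ) 2)
    (hw : w ∈ Icc (0 : ℝ) 2) (hm : 0 ≤ m) (h : riseTime v + m + riseTime w ≤ 2 * √2) :
    v + m ^ 2 / 4 + w ≤ 2 := by
  wlog hwv : w ≤ v generalizing v w
  · linarith [this hw hv (by linarith) (by linarith)]
  have hs : √2 ^ 2 = 2 := sq_sqrt zero_le_two
  have hs0 : 0 ≤ √2 := sqrt_nonneg 2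
  have hsmall : ∀ u ∈ Icc (0 : ℝ) 2, u ≤ 1 →
      riseTime u = √(2 * u) ∧ √(2 * u) ^ 2 = 2 * u ∧ √(2 * u) ≤ √2 := fun u hu hu1 =>
    ⟨if_pos hu1, sq_sqrt (by linarith [hu.1]), sqrt_le_sqrt (by linarith)⟩
  have hlarge : ∀ u ∈ Icc (0 : ℝ) 2, 1 < u →
      riseTime u = 2 * √2 - √(2 * (2 - u)) ∧ √(2 * (2 - u)) ^ 2 = 2 * (2 - u) ∧
        √(2 * (2 - u)) < √2 := fun u hu hu1 =>
    ⟨if_neg hu1.not_ge, sq_sqrt (by linarith [hu.2]),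
      sqrt_lt_sqrt (by linarith [hu.2]) (by linarith)⟩
  rcases le_or_gt v 1 with hv1 | hv1
  · obtain ⟨hTv, hXv, hXs⟩ := hsmall v hv hv1
    obtain ⟨hTw, hYw, hYs⟩ := hsmall w hw (hwv.trans hv1)
    rw [hTv, hTw] at h
    have hX := sqrt_nonneg (2 * v)
    have hY := sqrt_nonneg (2 * w)
    have hm2 : m ^ 2 ≤ (2 * √2 - √(2 * v) - √(2 * w)) ^ 2 := pow_le_pow_left₀ hm (by linarith) 2
    nlinarith [mul_nonneg hX (sub_nonneg.2 hXs), mul_nonneg hY (sub_nonneg.2 hYs),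
      mul_nonneg hX (sub_nonneg.2 hYs), mul_nonneg hY (sub_nonneg.2 hXs)]
  obtain ⟨hTv, hCv, hCs⟩ := hlarge v hv hv1
  rcases le_or_gt w 1 with hw1 | hw1
  · obtain ⟨hTw, hYw, -⟩ := hsmall w hw hw1
    rw [hTv, hTw] at h
    have hY := sqrt_nonneg (2 * w)
    have hm2 : m ^ 2 ≤ (√(2 * (2 - v)) - √(2 * w)) ^ 2 := pow_le_pow_left₀ hm (by linarith) 2
    nlinarith [mul_nonneg (show 0 ≤ 3 * √(2 * w) + √(2 * (2 - v)) by positivity)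
      (show 0 ≤ √(2 * (2 - v)) - √(2 * w) by linarith)]
  · obtain ⟨hTw, -, hCws⟩ := hlarge w hw hw1
    rw [hTv, hTw] at h
    linarith

/-- The class $\mathcal{L}_2(1,1;\mathbb{R})$. -/
structure LandauClass (f : ℝ → ℝ) : Prop where
  differentiable : Differentiable ℝ f
  abs_le_one : ∀ t, |f t| ≤ 1
  lipschitzWith_deriv : LipschitzWith 1 (deriv f)

namespace LandauClass

variable {f : ℝ → ℝ} {a b : ℝ}

theorem neg (hf : LandauClass f) : LandauClass (-f) where
  differentiable := hf.differentiable.neg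
  abs_le_one t := by simpa using hf.abs_le_one t
  lipschitzWith_deriv := by rw [deriv.neg']; exact hf.lipschitzWith_deriv.neg

theorem comp_neg (hf : LandauClass f) : LandauClass fun t => f (-t) where
  differentiable := hf.differentiable.comp differentiable_neg
  abs_le_one t := hf.abs_le_one (-t)
  lipschitzWith_deriv := by
    rw [show deriv (fun t => f (-t)) = fun t => -deriv f (-t) from funext (deriv_comp_neg f)]
    have := (hf.lipschitzWith_deriv.comp LipschitzWith.id.neg).neg
    rwa [mul_one] at this

theorem abs_sub_le_two (hf : LandauClass f) (s t : ℝ) : |f s - f t| ≤ 2 := by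
  have := hf.abs_le_one s
  have := hf.abs_le_one t
  rw [abs_le] at *
  constructor <;> linarith

theorem sq_deriv_le (hf : LandauClass f) (t : ℝ) : deriv f t ^ 2 ≤ 2 * (1 - f t) := by
  wlog hd : 0 ≤ deriv f t generalizing f t
  · simpa [deriv_comp_neg] using this hf.comp_neg (-t) (by simp [deriv_comp_neg]; linarith)
  -- over `[t, t + f' t]` the function climbs by at least `f' t ^ 2 / 2`, and it stays below `1`
  have hclimb := abs_integral_sub_mul_le hf.lipschitzWith_deriv
    (le_add_of_nonneg_right hd : t ≤ t + deriv f t)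
  rw [integral_deriv_eq_sub (fun s _ => hf.differentiable s)
    (hf.lipschitzWith_deriv.continuous.intervalIntegrable _ _)] at hclimb
  have := hf.abs_le_one (t + deriv f t)
  rw [abs_le] at *
  simp only [add_sub_cancel_left, NNReal.coe_one, one_mul] at hclimb
  nlinarith [hclimb.1, this.2]

theorem lipschitzWith_sqrt (hf : LandauClass f) : LipschitzWith 1 fun t => √(2 * (1 - f t)) := by
  have hd := hf.differentiable
  refine lipschitzWith_sqrt_of_sq_deriv_le (by fun_prop) fun t => ?_
  rw [deriv_const_mul _ (by fun_prop), deriv_const_sub]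
  nlinarith [hf.sq_deriv_le t]

theorem two_mul_sqrt_two_sub_le_sqrt_of_deriv_eq_zero (hf : LandauClass f) (hab : a ≤ b)
    (ha : deriv f a = 0) (hv : 1 ≤ f b - f a) :
    2 * √2 - (b - a) ≤ √(2 * (2 - (f b - f a))) := by
  have hfa := abs_le.1 (hf.abs_le_one a)
  have hfb := abs_le.1 (hf.abs_le_one b)
  -- Before `τ`, `f` accelerates from rest; after it, `√(2 (1 - f))` decreases at rate `≤ 1`.
  obtain ⟨τ, hτ, hfτ⟩ : ∃ τ ∈ Icc a b, f τ = (f a + 1) / 2 :=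
    intermediate_value_Icc hab hf.differentiable.continuous.continuousOn
      ⟨by linarith, by linarith⟩
  have hA : √(1 - f a) ≤ τ - a := by
    have := abs_sub_le_of_deriv_eq_zero hf.differentiable hf.lipschitzWith_deriv hτ.1 ha
    rw [sqrt_le_iff]
    refine ⟨by linarith [hτ.1], ?_⟩
    simp only [NNReal.coe_one, one_mul] at this
    linarith [le_abs_self (f τ - f a)]
  have hB : √(1 - f a) - √(2 * (1 - f b)) ≤ b - τ := by
    have := hf.lipschitzWith_sqrt.dist_le_mul τ b
    rw [Real.dist_eq, Real.dist_eq, NNReal.coe_one, one_mul, abs_sub_comm τ b,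
      abs_of_nonneg (sub_nonneg.2 hτ.2), hfτ, show 2 * (1 - (f a + 1) / 2) = 1 - f a by ring]
      at this
    exact (le_abs_self _).trans this
  calc 2 * √2 - (b - a) ≤ 2 * √2 - (2 * √(1 - f a) - √(2 * (1 - f b))) := by linarith
    _ ≤ √(4 - 2 * √(1 - f a) ^ 2 + √(2 * (1 - f b)) ^ 2) := by
      refine two_mul_sqrt_two_sub_le_sqrt (sqrt_nonneg _) (sqrt_le_sqrt (by linarith)) ?_
      rw [sq_sqrt (by linarith), sq_sqrt (by linarith)]
      linarith
    _ = √(2 * (2 - (f b - f a))) := by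
      rw [sq_sqrt (by linarith), sq_sqrt (by linarith)]
      ring_nf

theorem riseTime_le_of_deriv_eq_zero_left (hf : LandauClass f) (hab : a ≤ b)
    (ha : deriv f a = 0) : riseTime |f b - f a| ≤ b - a := by
  wlog hfab : f a ≤ f b generalizing f
  · simpa [abs_sub_comm, neg_add_eq_sub] using
      this hf.neg (by simp [deriv.neg', ha]) (by simp only [Pi.neg_apply]; linarith)
  rw [abs_of_nonneg (sub_nonneg.2 hfab), riseTime]
  split_ifs with hv
  · have := abs_sub_le_of_deriv_eq_zero hf.differentiable hf.lipschitzWith_deriv hab ha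
    simp only [NNReal.coe_one, one_mul, abs_of_nonneg (sub_nonneg.2 hfab)] at this
    rw [sqrt_le_iff]
    exact ⟨sub_nonneg.2 hab, by linarith⟩
  · linarith [hf.two_mul_sqrt_two_sub_le_sqrt_of_deriv_eq_zero hab ha (by linarith)]

theorem riseTime_le_of_deriv_eq_zero_right (hf : LandauClass f) (hab : a ≤ b)
    (hb : deriv f b = 0) : riseTime |f b - f a| ≤ b - a := by
  have := hf.comp_neg.riseTime_le_of_deriv_eq_zero_left (neg_le_neg hab)
    (by simp [deriv_comp_neg, hb])
  simp only [neg_neg] at this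
  rwa [abs_sub_comm, sub_neg_eq_add, neg_add_eq_sub] at this

end LandauClass

theorem variation_bound_compact_support_general (f : ℝ → ℝ)
    (hdiff : Differentiable ℝ f) (hbound : ∀ t : ℝ, |f t| ≤ 1)
    (hlip : LipschitzWith 1 (deriv f)) :
    (∫ t in (-Real.sqrt 2)..(Real.sqrt 2), |deriv f t|) ≤ 2 := by
  have hf : LandauClass f := ⟨hdiff, hbound, hlip⟩
  have hcont := hlip.continuous
  by_cases hzero : ∃ t ∈ Icc (-√2) √2, deriv f t = 0
  · obtain ⟨α, β, hα, hαβ, hβ, hfα, hfβ, hleft, hright⟩ := hcont.exists_first_last_zero hzero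
    have hI : ∀ c d, IntervalIntegrable (fun t => |deriv f t|) volume c d :=
      hcont.abs.intervalIntegrable
    have hmid := integral_abs_le_of_eq_zero_of_eq_zero hlip hαβ hfα hfβ
    rw [NNReal.coe_one, one_mul] at hmid
    rw [← integral_add_adjacent_intervals (hI _ α) (hI α _),
      ← integral_add_adjacent_intervals (hI α β) (hI β _),
      integral_abs_deriv_eq_abs_sub hdiff hcont hα hleft,
      integral_abs_deriv_eq_abs_sub hdiff hcont hβ hright]
    have := add_sq_div_four_add_le_two_of_riseTime ⟨abs_nonneg _, hf.abs_sub_le_two α (-√2)⟩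
      ⟨abs_nonneg _, hf.abs_sub_le_two √2 β⟩ (sub_nonneg.2 hαβ)
      (by linarith [hf.riseTime_le_of_deriv_eq_zero_right hα hfα,
        hf.riseTime_le_of_deriv_eq_zero_left hβ hfβ])
    linarith
  · push Not at hzero
    rw [integral_abs_deriv_eq_abs_sub hdiff hcont (neg_le_self (sqrt_nonneg 2))
      fun t ht => hzero t (Ioo_subset_Icc_self ht)]
    exact hf.abs_sub_le_two _ _

/-- If `f : ℝ → ℝ` is differentiable, `|f| ≤ 1`, `f'` is Lipschitz of
constant `1` and compactly supported, then `∫_{-√2}^{√2} |f'(t)| dt ≤ 2`. -/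
theorem variation_bound_compact_support (f : ℝ → ℝ)
    (hdiff : Differentiable ℝ f) (hbound : ∀ t : ℝ, |f t| ≤ 1)
    (hlip : LipschitzWith 1 (deriv f)) (hsupp : HasCompactSupport (deriv f)) :
    (∫ t in (-Real.sqrt 2)..(Real.sqrt 2), |deriv f t|) ≤ 2 :=
  variation_bound_compact_support_general f hdiff hbound hlip
end
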